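/- arXiv:1111.3159 — 5 statements merged into one kernel-verified Lean document; each statement's English description precedes it below -/
import Mathlib

section
/- Let X = {X_ij : 1 ≤ i,j ≤ n} be an n×n array of independent real random variables with n ≥ 2, E X_ij = c_ij, Var X_ij = σ_ij² ≥ 0 and E|X_ij|³ < ∞, and suppose Σ_{j=1}^n c_ij = 0 for every i and Σ_{i=1}^n c_ij = 0 for every j. Let π be a uniformly random permutation of {1,…,n} independent of X and let W = Σ_{i=1}^n X_{iπ(i)}. Then Var(W) = (1/n) Σ_{i,j=1}^n σ_ij² + (1/(n−1)) Σ_{i,j=1}^n c_ij². -/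
/-!
Given `π = σ`, the summands `X i (σ i)` are independent, so `W` has conditional mean
`∑ i, c i (σ i)` and conditional second moment `∑ i, σ2 i (σ i) + (∑ i, c i (σ i))²`; since `π` is
uniform and independent of the array, the moments of `W` are the averages of these over `σ`.
Over a uniform permutation `σ i` is uniform on `Fin n`, and `(σ i, σ i')` is uniform on the
off-diagonal pairs when `i ≠ i'`. Vanishing row sums make the mean vanish and turn the
off-diagonal average of `c i j * c i' j'` into `-(n (n - 1))⁻¹ ∑ j, c i j * c i' j`; vanishing
column sums then make the cross terms add up to `(n (n - 1))⁻¹ ∑ c²`, which together with the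
diagonal contribution `n⁻¹ ∑ c²` gives `(n - 1)⁻¹ ∑ c²`.
-/

open MeasureTheory ProbabilityTheory
open scoped ENNReal

noncomputable instance (n : ℕ) : MeasurableSpace (Equiv.Perm (Fin n)) := ⊤

open Finset

namespace Equiv.Perm

variable {α M : Type*} [DecidableEq α] [Fintype α] [AddCommMonoid M]

theorem card_nsmul_sum_apply (g : α → M) (a : α) :
    Fintype.card α • ∑ σ : Perm α, g (σ a) = (Fintype.card α).factorial • ∑ b, g b := by
  have hmove : ∀ b, ∑ σ : Perm α, g (σ a) = ∑ σ : Perm α, g (σ b) := fun b =>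
    Fintype.sum_equiv (Equiv.mulRight (swap b a)) _ _ fun σ => by simp
  calc Fintype.card α • ∑ σ : Perm α, g (σ a)
      = ∑ b, ∑ σ : Perm α, g (σ b) := by simp [← hmove]
    _ = ∑ σ : Perm α, ∑ b, g (σ b) := sum_comm
    _ = (Fintype.card α).factorial • ∑ b, g b := by simp [Equiv.sum_comp, Fintype.card_perm]

theorem card_mul_pred_nsmul_sum_apply_apply (f : α → α → M) {a a' : α} (ha : a ≠ a') :
    (Fintype.card α * (Fintype.card α - 1)) • ∑ σ : Perm α, f (σ a) (σ a')
      = (Fintype.card α).factorial • ∑ p ∈ univ.offDiag, f p.1 p.2 := by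
  have hmove : ∀ p ∈ (univ : Finset α).offDiag,
      ∑ σ : Perm α, f (σ a) (σ a') = ∑ σ : Perm α, f (σ p.1) (σ p.2) := by
    intro p hp
    obtain ⟨τ, hτ, hτ'⟩ : ∃ τ : Perm α, τ p.1 = a ∧ τ p.2 = a' := by
      simpa only [Perm.smul_def] using MulAction.is_two_pretransitive_iff.mp
        (isMultiplyPretransitive α 2) (mem_offDiag.mp hp).2.2 ha
    exact Fintype.sum_equiv (Equiv.mulRight τ) _ _ fun σ => by simp [hτ, hτ']
  have hoffDiag : ∀ σ : Perm α,
      ∑ p ∈ univ.offDiag, f (σ p.1) (σ p.2) = ∑ p ∈ univ.offDiag, f p.1 p.2 := fun σ =>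
    sum_equiv (σ.prodCongr σ) (fun p => by simp [σ.injective.eq_iff]) fun _ _ => rfl
  calc (Fintype.card α * (Fintype.card α - 1)) • ∑ σ : Perm α, f (σ a) (σ a')
      = ∑ p ∈ univ.offDiag, ∑ σ : Perm α, f (σ p.1) (σ p.2) := by
        rw [← sum_congr rfl hmove, sum_const, offDiag_card, card_univ, Nat.mul_sub_one]
    _ = ∑ σ : Perm α, ∑ p ∈ univ.offDiag, f (σ p.1) (σ p.2) := sum_comm
    _ = (Fintype.card α).factorial • ∑ p ∈ univ.offDiag, f p.1 p.2 := by
        simp [hoffDiag, Fintype.card_perm]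

theorem card_nsmul_sum_sum_apply (c : α → α → M) :
    Fintype.card α • ∑ σ : Perm α, ∑ i, c i (σ i)
      = (Fintype.card α).factorial • ∑ i, ∑ j, c i j := by
  rw [sum_comm, smul_sum, smul_sum]
  exact sum_congr rfl fun i _ => card_nsmul_sum_apply (c i) i

end Equiv.Perm

theorem Finset.sum_product_self_eq_sum_add_sum_offDiag {α M : Type*} [DecidableEq α]
    [AddCommMonoid M] (s : Finset α) (f : α × α → M) :
    ∑ p ∈ s ×ˢ s, f p = ∑ a ∈ s, f (a, a) + ∑ p ∈ s.offDiag, f p := by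
  rw [← diag_union_offDiag, sum_union (disjoint_diag_offDiag s), sum_diag]

section PermutedSums

variable {α : Type*} [Fintype α] [DecidableEq α]

theorem sq_sum_eq_sum_sq_add_sum_offDiag {R : Type*} [CommSemiring R] (x : α → R) :
    (∑ i, x i) ^ 2 = ∑ i, x i ^ 2 + ∑ p ∈ univ.offDiag, x p.1 * x p.2 := by
  rw [sq, sum_mul_sum, ← sum_product', sum_product_self_eq_sum_add_sum_offDiag]
  simp only [sq]

theorem sum_offDiag_mul_of_sum_eq_zero {R : Type*} [CommRing R] (u v : α → R)
    (hv : ∑ j, v j = 0) :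
    ∑ p ∈ univ.offDiag, u p.1 * v p.2 = -∑ j, u j * v j := by
  have h := sum_product_self_eq_sum_add_sum_offDiag univ fun p : α × α => u p.1 * v p.2
  rw [sum_product, sum_congr rfl fun i _ => (mul_sum univ v (u i)).symm] at h
  simp only [hv, mul_zero, sum_const_zero] at h
  linear_combination -h

theorem sum_perm_sum_apply_eq_zero [Nonempty α] (c : α → α → ℝ) (hrow : ∀ i, ∑ j, c i j = 0) :
    ∑ σ : Equiv.Perm α, ∑ i, c i (σ i) = 0 := by
  have h := Equiv.Perm.card_nsmul_sum_sum_apply c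
  simpa [hrow, Fintype.card_ne_zero] using h

theorem sub_one_mul_sum_perm_sq_sum_apply [Nonempty α] (c : α → α → ℝ)
    (hrow : ∀ i, ∑ j, c i j = 0) (hcol : ∀ j, ∑ i, c i j = 0) :
    ((Fintype.card α : ℝ) - 1) * ∑ σ : Equiv.Perm α, (∑ i, c i (σ i)) ^ 2
      = (Fintype.card α).factorial * ∑ i, ∑ j, c i j ^ 2 := by
  set N := Fintype.card α
  have hdiag : ∀ i ∈ (univ : Finset α),
      (N : ℝ) * ∑ σ : Equiv.Perm α, c i (σ i) ^ 2 = N.factorial * ∑ j, c i j ^ 2 := by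
    intro i _
    simpa only [nsmul_eq_mul] using Equiv.Perm.card_nsmul_sum_apply (fun j => c i j ^ 2) i
  have hoffDiag : ∀ p ∈ (univ : Finset α).offDiag,
      (N : ℝ) * (N - 1) * ∑ σ : Equiv.Perm α, c p.1 (σ p.1) * c p.2 (σ p.2)
        = -(N.factorial * ∑ j, c p.1 j * c p.2 j) := by
    intro p hp
    have h := Equiv.Perm.card_mul_pred_nsmul_sum_apply_apply (fun j j' => c p.1 j * c p.2 j')
      (mem_offDiag.mp hp).2.2
    rw [sum_offDiag_mul_of_sum_eq_zero _ _ (hrow p.2), nsmul_eq_mul, nsmul_eq_mul,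
      Nat.cast_mul, Nat.cast_pred Fintype.card_pos] at h
    linear_combination h
  have hcross : ∑ p ∈ (univ : Finset α).offDiag, ∑ j, c p.1 j * c p.2 j
      = -∑ i, ∑ j, c i j ^ 2 := by
    rw [sum_comm, sum_comm (s := univ) (t := univ), ← sum_neg_distrib]
    refine sum_congr rfl fun j _ => ?_
    rw [sum_offDiag_mul_of_sum_eq_zero (c · j) (c · j) (hcol j)]
    simp only [sq]
  have hexpand : ∑ σ : Equiv.Perm α, (∑ i, c i (σ i)) ^ 2
      = ∑ i, ∑ σ : Equiv.Perm α, c i (σ i) ^ 2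
        + ∑ p ∈ univ.offDiag, ∑ σ : Equiv.Perm α, c p.1 (σ p.1) * c p.2 (σ p.2) := by
    simp only [sq_sum_eq_sum_sq_add_sum_offDiag fun i => c _ _, sum_add_distrib]
    congr 1 <;> exact sum_comm
  refine mul_left_cancel₀ (Nat.cast_ne_zero.mpr Fintype.card_ne_zero : (N : ℝ) ≠ 0) ?_
  calc (N : ℝ) * ((N - 1) * ∑ σ : Equiv.Perm α, (∑ i, c i (σ i)) ^ 2)
      = (N - 1) * ∑ i, N * ∑ σ : Equiv.Perm α, c i (σ i) ^ 2
        + ∑ p ∈ univ.offDiag,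
            N * (N - 1) * ∑ σ : Equiv.Perm α, c p.1 (σ p.1) * c p.2 (σ p.2) := by
        rw [hexpand, ← mul_sum, ← mul_sum]
        ring
    _ = (N - 1) * ∑ i, N.factorial * ∑ j, c i j ^ 2
        + ∑ p ∈ univ.offDiag, -(N.factorial * ∑ j, c p.1 j * c p.2 j) := by
        rw [sum_congr rfl hdiag, sum_congr rfl hoffDiag]
    _ = N * (N.factorial * ∑ i, ∑ j, c i j ^ 2) := by
        rw [sum_neg_distrib, ← mul_sum, ← mul_sum, hcross]
        ring

end PermutedSums

theorem comp_eq_sum_indicator {Ω ι E : Type*} [Fintype ι] [AddCommMonoid E] (π : Ω → ι)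
    (G : ι → Ω → E) :
    (fun ω => G (π ω) ω) = fun ω => ∑ i, {ω' | π ω' = i}.indicator (G i) ω := by
  classical
  ext ω
  simp [Set.indicator_apply]

section MixtureOverDiscreteIndex

variable {Ω ι : Type*} [MeasurableSpace Ω] {μ : Measure Ω} [Fintype ι] [MeasurableSpace ι]
  [DiscreteMeasurableSpace ι]

theorem memLp_comp_of_measurable {E : Type*} [NormedAddCommGroup E] {π : Ω → ι}
    (hπ : Measurable π) {G : ι → Ω → E} {p : ℝ≥0∞} (hG : ∀ i, MemLp (G i) p μ) :
    MemLp (fun ω => G (π ω) ω) p μ := by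
  rw [comp_eq_sum_indicator]
  exact memLp_finsetSum _ fun i _ => (hG i).indicator (hπ (measurableSet_singleton i))

theorem integral_comp_eq_sum_of_indepFun {β : Type*} [MeasurableSpace β] {π : Ω → ι}
    {Y : Ω → β} (hπ : Measurable π) (hind : IndepFun π Y μ) {g : ι → β → ℝ}
    (hg : ∀ i, Measurable (g i)) (hint : ∀ i, Integrable (fun ω => g i (Y ω)) μ) :
    ∫ ω, g (π ω) (Y ω) ∂μ = ∑ i, μ.real {ω | π ω = i} * ∫ ω, g i (Y ω) ∂μ := by
  have hfiber : ∀ i, MeasurableSet {ω | π ω = i} := fun i => hπ (measurableSet_singleton i)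
  rw [comp_eq_sum_indicator π fun i ω => g i (Y ω), integral_finsetSum _
    fun i _ => (hint i).indicator (hfiber i)]
  refine sum_congr rfl fun i _ => ?_
  have hindep_i := hind.comp (φ := ({i} : Set ι).indicator (1 : ι → ℝ)) .of_discrete (hg i)
  have hprod : {ω | π ω = i}.indicator (fun ω => g i (Y ω))
      = (({i} : Set ι).indicator 1 ∘ π) * (g i ∘ Y) := by
    ext ω
    by_cases h : π ω = i <;> simp [h]
  have hmass : ∫ ω, (({i} : Set ι).indicator (1 : ι → ℝ) ∘ π) ω ∂μ = μ.real {ω | π ω = i} := by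
    rw [← integral_indicator_one (hfiber i)]
    rfl
  rw [hprod, hindep_i.integral_mul_eq_mul_integral
    (Measurable.of_discrete.comp hπ).aestronglyMeasurable (hint i).aestronglyMeasurable, hmass]
  rfl

end MixtureOverDiscreteIndex

theorem integral_sq_sum_of_pairwise_indepFun {Ω ι : Type*} [MeasurableSpace Ω] {μ : Measure Ω}
    [IsProbabilityMeasure μ] {Z : ι → Ω → ℝ} {s : Finset ι} (hZ : ∀ i ∈ s, MemLp (Z i) 2 μ)
    (hind : (s : Set ι).Pairwise fun i j => IndepFun (Z i) (Z j) μ) :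
    ∫ ω, (∑ i ∈ s, Z i ω) ^ 2 ∂μ = ∑ i ∈ s, variance (Z i) μ + (∑ i ∈ s, ∫ ω, Z i ω ∂μ) ^ 2 := by
  have h := IndepFun.variance_sum hZ hind
  rw [variance_eq_sub (memLp_finsetSum' s hZ)] at h
  simp only [Pi.pow_apply, Finset.sum_apply] at h
  rw [integral_finsetSum s fun i hi => (hZ i hi).integrable one_le_two] at h
  linear_combination h

section RandomlyPermutedArray

variable {Ω α : Type*} [MeasurableSpace Ω] {μ : Measure Ω} [Fintype α] {X : α → α → Ω → ℝ}

theorem integral_sq_sum_apply_perm [IsProbabilityMeasure μ] (hX : ∀ i j, MemLp (X i j) 2 μ)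
    (hind : iIndepFun (fun p : α × α => X p.1 p.2) μ) (σ : Equiv.Perm α) :
    ∫ ω, (∑ i, X i (σ i) ω) ^ 2 ∂μ
      = ∑ i, variance (X i (σ i)) μ + (∑ i, ∫ ω, X i (σ i) ω ∂μ) ^ 2 :=
  integral_sq_sum_of_pairwise_indepFun (fun i _ => hX i (σ i)) fun i _ i' _ hii' =>
    hind.indepFun (i := (i, σ i)) (j := (i', σ i')) fun h => hii' (congrArg Prod.fst h)

theorem integral_comp_sum_apply_of_uniform_perm [DecidableEq α] [MeasurableSpace (Equiv.Perm α)]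
    [DiscreteMeasurableSpace (Equiv.Perm α)] {π : Ω → Equiv.Perm α} (hπ : Measurable π)
    (hunif : ∀ σ, μ.real {ω | π ω = σ} = ((Fintype.card α).factorial : ℝ)⁻¹)
    (hind : IndepFun π (fun ω (p : α × α) => X p.1 p.2 ω) μ) {F : ℝ → ℝ} (hF : Measurable F)
    (hint : ∀ σ : Equiv.Perm α, Integrable (fun ω => F (∑ i, X i (σ i) ω)) μ) :
    ∫ ω, F (∑ i, X i (π ω i) ω) ∂μ
      = ((Fintype.card α).factorial : ℝ)⁻¹ * ∑ σ : Equiv.Perm α, ∫ ω, F (∑ i, X i (σ i) ω) ∂μ := by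
  rw [mul_sum]
  simpa only [hunif] using integral_comp_eq_sum_of_indepFun hπ hind
    (g := fun σ x => F (∑ i, x (i, σ i)))
    (fun σ => hF.comp (Finset.measurable_sum _ fun i _ => measurable_pi_apply (i, σ i))) hint

end RandomlyPermutedArray

theorem variance_of_combinatorial_sum_general
    {Ω : Type*} [MeasureSpace Ω] [IsProbabilityMeasure (ℙ : Measure Ω)]
    (n : ℕ) (hn : 2 ≤ n)
    (X : Fin n → Fin n → Ω → ℝ) (c σ2 : Fin n → Fin n → ℝ)
    (hmom : ∀ i j, MemLp (X i j) 3 ℙ)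
    (hindep : iIndepFun (fun p : Fin n × Fin n => X p.1 p.2) ℙ)
    (hmean : ∀ i j, ∫ ω, X i j ω ∂ℙ = c i j)
    (hvar : ∀ i j, variance (X i j) ℙ = σ2 i j)
    (hrow : ∀ i, ∑ j, c i j = 0)
    (hcol : ∀ j, ∑ i, c i j = 0)
    (π : Ω → Equiv.Perm (Fin n)) (hπmeas : Measurable π)
    (hπunif : ∀ σ : Equiv.Perm (Fin n), ℙ {ω | π ω = σ} = 1 / (n.factorial : ℝ≥0∞))
    (hπindep : IndepFun π (fun ω (p : Fin n × Fin n) => X p.1 p.2 ω) ℙ) :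
    variance (fun ω => ∑ i, X i (π ω i) ω) ℙ
      = (1 / (n : ℝ)) * (∑ i, ∑ j, σ2 i j)
        + (1 / ((n : ℝ) - 1)) * (∑ i, ∑ j, c i j ^ 2) := by
  have : Nonempty (Fin n) := ⟨⟨0, by omega⟩⟩
  have hn1 : (n : ℝ) - 1 ≠ 0 := sub_ne_zero.mpr (by exact_mod_cast (by omega : n ≠ 1))
  have hX2 : ∀ i j, MemLp (X i j) 2 ℙ := fun i j => (hmom i j).mono_exponent (by norm_num)
  have hS : ∀ σ : Equiv.Perm (Fin n), MemLp (fun ω => ∑ i, X i (σ i) ω) 2 ℙ := fun σ =>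
    memLp_finsetSum _ fun i _ => hX2 i (σ i)
  have hunif : ∀ σ, (ℙ : Measure Ω).real {ω | π ω = σ}
      = ((Fintype.card (Fin n)).factorial : ℝ)⁻¹ := fun σ => by
    simp [measureReal_def, hπunif σ]
  have hEW : ∫ ω, ∑ i, X i (π ω i) ω ∂ℙ = 0 := by
    refine (integral_comp_sum_apply_of_uniform_perm (F := id) hπmeas hunif hπindep
      measurable_id fun σ => (hS σ).integrable one_le_two).trans ?_
    simp only [id, integral_finsetSum _ fun i _ => (hX2 i _).integrable one_le_two, hmean,
      sum_perm_sum_apply_eq_zero c hrow, mul_zero]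
  have hEW2 : ∫ ω, (∑ i, X i (π ω i) ω) ^ 2 ∂ℙ
      = (n.factorial : ℝ)⁻¹ * (∑ σ : Equiv.Perm (Fin n), ∑ i, σ2 i (σ i)
        + ∑ σ : Equiv.Perm (Fin n), (∑ i, c i (σ i)) ^ 2) := by
    rw [integral_comp_sum_apply_of_uniform_perm (F := (· ^ 2)) hπmeas hunif
      hπindep (measurable_id.pow_const 2) fun σ => (hS σ).integrable_sq]
    simp only [integral_sq_sum_apply_perm hX2 hindep, hvar, hmean, sum_add_distrib,
      Fintype.card_fin]
  have havg_var := Equiv.Perm.card_nsmul_sum_sum_apply σ2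
  have havg_sq := sub_one_mul_sum_perm_sq_sum_apply c hrow hcol
  simp only [Fintype.card_fin, nsmul_eq_mul] at havg_var havg_sq
  rw [variance_eq_sub (memLp_comp_of_measurable hπmeas hS : MemLp (fun ω => _) 2 ℙ)]
  simp only [Pi.pow_apply, hEW, hEW2]
  field_simp
  linear_combination (n - 1 : ℝ) * havg_var + n * havg_sq

/-- **Combinatorial CLT, variance formula.**
Given an `n × n` array of independent random variables `X i j` (`n ≥ 2`) with means
`c i j`, variances `σ2 i j`, finite third absolute moments, all row and column sums of the
means zero, and a uniform random permutation `π` independent of the array, the variance of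
`W = ∑ i, X i (π i)` equals `(1/n) ∑ σ2 + (1/(n-1)) ∑ c²`. -/
theorem variance_of_combinatorial_sum
    {Ω : Type*} [MeasureSpace Ω] [IsProbabilityMeasure (ℙ : Measure Ω)]
    (n : ℕ) (hn : 2 ≤ n)
    (X : Fin n → Fin n → Ω → ℝ) (c σ2 : Fin n → Fin n → ℝ)
    (hmeas : ∀ i j, Measurable (X i j))
    (hmom : ∀ i j, MemLp (X i j) 3 ℙ)
    (hindep : iIndepFun (fun p : Fin n × Fin n => X p.1 p.2) ℙ)
    (hmean : ∀ i j, ∫ ω, X i j ω ∂ℙ = c i j)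
    (hvar : ∀ i j, variance (X i j) ℙ = σ2 i j)
    (hrow : ∀ i, ∑ j, c i j = 0)
    (hcol : ∀ j, ∑ i, c i j = 0)
    (π : Ω → Equiv.Perm (Fin n)) (hπmeas : Measurable π)
    (hπunif : ∀ σ : Equiv.Perm (Fin n), ℙ {ω | π ω = σ} = 1 / (n.factorial : ℝ≥0∞))
    (hπindep : IndepFun π (fun ω (p : Fin n × Fin n) => X p.1 p.2 ω) ℙ) :
    variance (fun ω => ∑ i, X i (π ω i) ω) ℙ
      = (1 / (n : ℝ)) * (∑ i, ∑ j, σ2 i j)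
        + (1 / ((n : ℝ) - 1)) * (∑ i, ∑ j, c i j ^ 2) :=
  variance_of_combinatorial_sum_general n hn X c σ2 hmom hindep hmean hvar hrow hcol π hπmeas hπunif
    hπindep
end

section
/- Suppose (S,S') is an exchangeable pair of square-integrable real random variables satisfying E(S'−S | S) = −λS + R for some λ > 0 and some random variable R, and suppose E S² − E|SR|/λ − 1/2 > 0. Set δ = E|S'−S|³ / λ. Then for all a < b, P(S ∈ [a,b]) ≤ (E|S| + E|R|/λ) ((b−a)/2 + δ) / (E S² − E|SR|/λ − 1/2) + sqrt( Var( E( (1/(2λ))(S'−S)² 1{|S'−S| ≤ δ} | S ) ) ) / (E S² − E|SR|/λ − 1/2). -/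
/-!
Test the Stein identity of the pair against `f`, the identity clamped to `[a - δ, b + δ]` and
centred at `(a + b) / 2`, so that `|f| ≤ c := (b - a) / 2 + δ`. Exchangeability turns the linearity
condition into `E[(f S' - f S)(S' - S)] = 2λ E[f(S) S] - 2 E[f(S) R] ≤ 2λc (E|S| + E|R|/λ)`.
Since `f` is monotone with slope one on `[a - δ, b + δ]`, the integrand dominates
`(S' - S)² 1{|S' - S| ≤ δ} 1{S ∈ [a, b]}`, whose mean is `2λ E[1{S ∈ [a, b]} g]` with
`g = E[(S' - S)² 1{|S' - S| ≤ δ} / (2λ) | S]`; and `E[1{S ∈ [a, b]} g] ≥ E[g] P(S ∈ [a, b]) - √Var g`.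
Finally `E g ≥ (E(S' - S)² - E|S' - S|³/δ) / (2λ) ≥ D` by the choice of `δ`, because the same identity
with `f = id` gives `E(S' - S)² = 2λ E S² - 2 E[S R]`.
-/

open MeasureTheory ProbabilityTheory Set

section

variable {Ω : Type*} {mΩ : MeasurableSpace Ω} {μ : Measure Ω}

theorem integral_mul_condExp {m : MeasurableSpace Ω} (hm : m ≤ mΩ) [SigmaFinite (μ.trim hm)]
    {φ X : Ω → ℝ} (hφ : StronglyMeasurable[m] φ) (hφX : Integrable (φ * X) μ)
    (hX : Integrable X μ) :
    ∫ ω, φ ω * μ[X|m] ω ∂μ = ∫ ω, φ ω * X ω ∂μ :=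
  calc ∫ ω, φ ω * μ[X|m] ω ∂μ = ∫ ω, μ[φ * X|m] ω ∂μ :=
        integral_congr_ae (condExp_mul_of_stronglyMeasurable_left hφ hφX hX).symm
    _ = ∫ ω, φ ω * X ω ∂μ := integral_condExp hm

theorem abs_integral_mul_le {φ Y : Ω → ℝ} {c : ℝ} (hφ : ∀ ω, |φ ω| ≤ c) (hY : Integrable Y μ) :
    |∫ ω, φ ω * Y ω ∂μ| ≤ c * ∫ ω, |Y ω| ∂μ := by
  calc |∫ ω, φ ω * Y ω ∂μ| ≤ ∫ ω, c * |Y ω| ∂μ :=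
        norm_integral_le_of_norm_le (hY.abs.const_mul c) (.of_forall fun ω => by
          rw [Real.norm_eq_abs, abs_mul]
          exact mul_le_mul_of_nonneg_right (hφ ω) (abs_nonneg _))
    _ = c * ∫ ω, |Y ω| ∂μ := integral_const_mul c _

theorem integral_abs_sub_integral_le_sqrt_variance [IsProbabilityMeasure μ] {g : Ω → ℝ}
    (hg : MemLp g 2 μ) : ∫ ω, |g ω - μ[g]| ∂μ ≤ √(Var[g; μ]) := by
  have hY : MemLp (fun ω => |g ω - μ[g]|) 2 μ := (hg.sub (memLp_const _)).abs
  have hVar : μ[(fun ω => |g ω - μ[g]|) ^ 2] = Var[g; μ] := by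
    simp only [Pi.pow_apply, sq_abs, variance_eq_integral hg.aemeasurable]
  refine Real.le_sqrt_of_sq_le ?_
  -- `(E|Y|)² ≤ E Y²` for `Y = |g - E g|` is the nonnegativity of `Var Y`.
  have := variance_nonneg (fun ω => |g ω - μ[g]|) μ
  rw [variance_eq_sub hY, hVar] at this
  linarith

theorem integral_mul_ge_sub_sqrt_variance [IsProbabilityMeasure μ] {χ g : Ω → ℝ}
    (hχ : AEStronglyMeasurable χ μ) (hχ01 : ∀ ω, χ ω ∈ Icc 0 1) (hg : MemLp g 2 μ) :
    μ[g] * μ[χ] - √(Var[g; μ]) ≤ ∫ ω, χ ω * g ω ∂μ := by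
  have hχ1 : ∀ ω, ‖χ ω‖ ≤ 1 := fun ω => (abs_of_nonneg (hχ01 ω).1).trans_le (hχ01 ω).2
  have hχint : Integrable χ μ := .of_bound hχ 1 (.of_forall hχ1)
  have hcent : Integrable (fun ω => χ ω * (g ω - μ[g])) μ :=
    (hg.integrable one_le_two).sub (integrable_const _) |>.bdd_mul hχ (c := 1) (.of_forall hχ1)
  have hsplit : ∫ ω, χ ω * g ω ∂μ = ∫ ω, χ ω * (g ω - μ[g]) ∂μ + μ[g] * μ[χ] := by
    rw [← integral_const_mul, ← integral_add hcent (hχint.const_mul _)]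
    congr 1 with ω; ring
  have hlow : -∫ ω, |g ω - μ[g]| ∂μ ≤ ∫ ω, χ ω * (g ω - μ[g]) ∂μ := by
    rw [← integral_neg]
    refine integral_mono ((hg.integrable one_le_two).sub (integrable_const _)).abs.neg hcent
      fun ω => ?_
    have h := neg_abs_le (χ ω * (g ω - μ[g]))
    rw [abs_mul, abs_of_nonneg (hχ01 ω).1] at h
    nlinarith [(hχ01 ω).2, abs_nonneg (g ω - μ[g])]
  linarith [integral_abs_sub_integral_le_sqrt_variance hg]

theorem integral_mul_ge_sub_sqrt_variance_condExp [IsProbabilityMeasure μ]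
    {m : MeasurableSpace Ω} (hm : m ≤ mΩ) {χ X : Ω → ℝ} (hχ : StronglyMeasurable[m] χ)
    (hχ01 : ∀ ω, χ ω ∈ Icc 0 1) (hX : MemLp X 2 μ) :
    μ[X] * μ[χ] - √(Var[μ[X|m]; μ]) ≤ ∫ ω, χ ω * X ω ∂μ := by
  have hχX : Integrable (χ * X) μ :=
    (hX.integrable one_le_two).bdd_mul (hχ.mono hm).aestronglyMeasurable (c := 1)
      (.of_forall fun ω => (abs_of_nonneg (hχ01 ω).1).trans_le (hχ01 ω).2)
  rw [← integral_mul_condExp hm hχ hχX (hX.integrable one_le_two), ← integral_condExp hm]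
  exact integral_mul_ge_sub_sqrt_variance (hχ.mono hm).aestronglyMeasurable hχ01
    (hX.condExp one_le_two)

theorem integral_ite_mem_eq_toReal {X : Ω → ℝ} (hX : Measurable X) {s : Set ℝ}
    [DecidablePred (· ∈ s)] (hs : MeasurableSet s) :
    ∫ ω, (if X ω ∈ s then (1 : ℝ) else 0) ∂μ = (μ {ω | X ω ∈ s}).toReal := by
  change _ = (μ (X ⁻¹' s)).toReal
  rw [← measureReal_def, ← integral_indicator_one (hX hs)]
  congr 1 with ω
  by_cases h : X ω ∈ s <;> simp [h]

theorem sq_mul_indicator_le_of_monotone {f : ℝ → ℝ} (hf : Monotone f) {a b δ k : ℝ}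
    (hfIcc : ∀ t ∈ Icc (a - δ) (b + δ), f t = t + k) (x y : ℝ) :
    (y - x) ^ 2 * (if |y - x| ≤ δ then 1 else 0) * (if x ∈ Icc a b then 1 else 0)
      ≤ (f y - f x) * (y - x) := by
  have hnonneg : 0 ≤ (f y - f x) * (y - x) :=
    by simpa using (monovary_id_iff.2 hf).sub_mul_sub_nonneg x y
  by_cases hxy : |y - x| ≤ δ
  · by_cases hx : x ∈ Icc a b
    · obtain ⟨hxy₁, hxy₂⟩ := abs_le.1 hxy
      rw [if_pos hxy, if_pos hx, hfIcc x ⟨by linarith [hx.1], by linarith [hx.2]⟩,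
        hfIcc y ⟨by linarith [hx.1], by linarith [hx.2]⟩]
      exact le_of_eq (by ring)
    · simpa [hx] using hnonneg
  · simpa [hxy] using hnonneg

theorem sq_sub_abs_pow_three_div_le {δ : ℝ} (hδ : 0 < δ) (z : ℝ) :
    z ^ 2 - |z| ^ 3 / δ ≤ z ^ 2 * (if |z| ≤ δ then 1 else 0) := by
  split_ifs with hz
  · have : 0 ≤ |z| ^ 3 / δ := by positivity
    linarith
  · rw [mul_zero, sub_nonpos, le_div_iff₀ hδ, ← sq_abs, pow_succ]
    exact mul_le_mul_of_nonneg_left (not_le.1 hz).le (by positivity)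

theorem integral_sq_sub_div_le_integral_sq_mul_indicator {Z : Ω → ℝ} {δ : ℝ} (hδ : 0 < δ)
    (hZ : AEStronglyMeasurable Z μ) (hZ2 : Integrable (fun ω => Z ω ^ 2) μ)
    (hZ3 : Integrable (fun ω => |Z ω| ^ 3) μ) :
    ∫ ω, Z ω ^ 2 ∂μ - (∫ ω, |Z ω| ^ 3 ∂μ) / δ
      ≤ ∫ ω, Z ω ^ 2 * (if |Z ω| ≤ δ then 1 else 0) ∂μ := by
  have htrunc : Integrable (fun ω => Z ω ^ 2 * (if |Z ω| ≤ δ then 1 else 0)) μ := by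
    refine hZ2.mono ?_ (.of_forall fun ω => ?_)
    · refine (Measurable.comp_aemeasurable (g := fun z : ℝ => z ^ 2 * (if |z| ≤ δ then 1 else 0))
        ?_ hZ.aemeasurable).aestronglyMeasurable
      exact (measurable_id.pow_const 2).mul <| Measurable.ite
        (measurableSet_le measurable_id.abs measurable_const) measurable_const measurable_const
    · split_ifs <;> simp [sq_nonneg]
  rw [← integral_div, ← integral_sub hZ2 (hZ3.div_const δ)]
  exact integral_mono (hZ2.sub (hZ3.div_const δ)) htrunc (sq_sub_abs_pow_three_div_le hδ <| Z ·)

theorem integral_sq_eq_zero_of_integral_abs_pow_three_eq_zero {Z : Ω → ℝ}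
    (hZ3 : Integrable (fun ω => |Z ω| ^ 3) μ) (h : ∫ ω, |Z ω| ^ 3 ∂μ = 0) :
    ∫ ω, Z ω ^ 2 ∂μ = 0 := by
  have hZ : Z =ᵐ[μ] 0 := by
    filter_upwards [(integral_eq_zero_iff_of_nonneg (fun ω => by positivity) hZ3).1 h] with ω hω
    simpa using hω
  rw [integral_congr_ae (hZ.mono fun ω hω => by simp [hω] : (fun ω => Z ω ^ 2) =ᵐ[μ] 0)]
  simp

theorem integral_sq_div_sub_half_le_integral_truncated {Z : Ω → ℝ} {lam δ : ℝ} (hlam : 0 < lam)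
    (hδ : 0 < δ) (hδ_def : δ = (∫ ω, |Z ω| ^ 3 ∂μ) / lam) (hZ : MemLp Z 2 μ)
    (hZ3 : Integrable (fun ω => |Z ω| ^ 3) μ) :
    (∫ ω, Z ω ^ 2 ∂μ) / (2 * lam) - 1 / 2
      ≤ ∫ ω, 1 / (2 * lam) * Z ω ^ 2 * (if |Z ω| ≤ δ then 1 else 0) ∂μ := by
  have hcube : (∫ ω, |Z ω| ^ 3 ∂μ) / δ = lam := by
    rw [div_eq_iff hδ.ne', hδ_def, mul_div_cancel₀ _ hlam.ne']
  simp_rw [mul_assoc]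
  rw [integral_const_mul]
  calc _ = 1 / (2 * lam) * ((∫ ω, Z ω ^ 2 ∂μ) - (∫ ω, |Z ω| ^ 3 ∂μ) / δ) := by
        rw [hcube]; field_simp
    _ ≤ _ := by
        gcongr
        exact integral_sq_sub_div_le_integral_sq_mul_indicator hδ hZ.1 hZ.integrable_sq hZ3

noncomputable def clampCentered (a b δ x : ℝ) : ℝ := max (a - δ) (min (b + δ) x) - (a + b) / 2

theorem monotone_clampCentered (a b δ : ℝ) : Monotone (clampCentered a b δ) :=
  fun _ _ hxy => sub_le_sub_right (max_le_max le_rfl (min_le_min le_rfl hxy)) _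

theorem measurable_clampCentered (a b δ : ℝ) : Measurable (clampCentered a b δ) :=
  (monotone_clampCentered a b δ).measurable

theorem abs_clampCentered_le {a b δ : ℝ} (h : a - δ ≤ b + δ) (x : ℝ) :
    |clampCentered a b δ x| ≤ (b - a) / 2 + δ := by
  unfold clampCentered
  rw [abs_le]
  constructor <;> linarith [le_max_left (a - δ) (min (b + δ) x),
    max_le h (min_le_left (b + δ) x)]

theorem clampCentered_of_mem_Icc {a b δ x : ℝ} (hx : x ∈ Icc (a - δ) (b + δ)) :
    clampCentered a b δ x = x + -((a + b) / 2) := by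
  rw [clampCentered, min_eq_right hx.2, max_eq_right hx.1, sub_eq_add_neg]

section ExchangeablePair

variable {S S' R : Ω → ℝ} {lam : ℝ}

theorem memLp_snd_of_exchangeable {p : ENNReal}
    (hexch : IdentDistrib (fun ω => (S ω, S' ω)) (fun ω => (S' ω, S ω)) μ μ)
    (hS : MemLp S p μ) : MemLp S' p μ :=
  (hexch.comp measurable_fst).memLp_snd hS

theorem integral_comp_snd_mul_sub_eq_neg
    (hexch : IdentDistrib (fun ω => (S ω, S' ω)) (fun ω => (S' ω, S ω)) μ μ)
    {f : ℝ → ℝ} (hf : Measurable f) :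
    ∫ ω, f (S' ω) * (S' ω - S ω) ∂μ = -∫ ω, f (S ω) * (S' ω - S ω) ∂μ := by
  have h := (hexch.comp (u := fun p : ℝ × ℝ => f p.1 * (p.1 - p.2))
    (by fun_prop)).integral_eq
  simp only [Function.comp_def] at h
  rw [← h, ← integral_neg]
  congr 1 with ω; ring

theorem integral_sub_comp_mul_sub
    (hexch : IdentDistrib (fun ω => (S ω, S' ω)) (fun ω => (S' ω, S ω)) μ μ)
    {f : ℝ → ℝ} (hf : Measurable f) (hfΔ : Integrable (fun ω => f (S ω) * (S' ω - S ω)) μ) :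
    ∫ ω, (f (S' ω) - f (S ω)) * (S' ω - S ω) ∂μ = -2 * ∫ ω, f (S ω) * (S' ω - S ω) ∂μ := by
  have hf'Δ : Integrable (fun ω => f (S' ω) * (S' ω - S ω)) μ := by
    have h := (hexch.comp (u := fun p : ℝ × ℝ => f p.1 * (p.2 - p.1))
      (by fun_prop)).integrable_snd hfΔ
    refine h.neg.congr (.of_forall fun ω => ?_)
    simp only [Function.comp_apply, Pi.neg_apply]; ring
  simp_rw [sub_mul]
  rw [integral_sub hf'Δ hfΔ, integral_comp_snd_mul_sub_eq_neg hexch hf]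
  ring

theorem integral_comp_mul_sub_eq_of_condExp [IsFiniteMeasure μ]
    (hS : Measurable S) (hlin : μ[fun ω => S' ω - S ω | MeasurableSpace.comap S inferInstance]
      =ᵐ[μ] fun ω => -lam * S ω + R ω)
    {f : ℝ → ℝ} (hf : Measurable f) (hΔ : Integrable (fun ω => S' ω - S ω) μ)
    (hfΔ : Integrable (fun ω => f (S ω) * (S' ω - S ω)) μ)
    (hfS : Integrable (fun ω => f (S ω) * S ω) μ) (hfR : Integrable (fun ω => f (S ω) * R ω) μ) :
    ∫ ω, f (S ω) * (S' ω - S ω) ∂μ = -lam * ∫ ω, f (S ω) * S ω ∂μ + ∫ ω, f (S ω) * R ω ∂μ := by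
  have hfS_meas : StronglyMeasurable[MeasurableSpace.comap S inferInstance] (fun ω => f (S ω)) :=
    (hf.comp (comap_measurable S)).stronglyMeasurable
  rw [← integral_mul_condExp hS.comap_le hfS_meas hfΔ hΔ,
    integral_congr_ae (hlin.mono fun ω hω => by rw [hω]), ← integral_const_mul,
    ← integral_add (hfS.const_mul _) hfR]
  congr 1 with ω; ring

theorem integral_sub_comp_mul_sub_eq [IsFiniteMeasure μ]
    (hexch : IdentDistrib (fun ω => (S ω, S' ω)) (fun ω => (S' ω, S ω)) μ μ)
    (hS : Measurable S) (hlin : μ[fun ω => S' ω - S ω | MeasurableSpace.comap S inferInstance]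
      =ᵐ[μ] fun ω => -lam * S ω + R ω)
    {f : ℝ → ℝ} (hf : Measurable f) (hΔ : Integrable (fun ω => S' ω - S ω) μ)
    (hfΔ : Integrable (fun ω => f (S ω) * (S' ω - S ω)) μ)
    (hfS : Integrable (fun ω => f (S ω) * S ω) μ) (hfR : Integrable (fun ω => f (S ω) * R ω) μ) :
    ∫ ω, (f (S' ω) - f (S ω)) * (S' ω - S ω) ∂μ
      = 2 * lam * ∫ ω, f (S ω) * S ω ∂μ - 2 * ∫ ω, f (S ω) * R ω ∂μ := by
  rw [integral_sub_comp_mul_sub hexch hf hfΔ,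
    integral_comp_mul_sub_eq_of_condExp hS hlin hf hΔ hfΔ hfS hfR]
  ring

theorem integral_sq_sub_eq [IsFiniteMeasure μ]
    (hexch : IdentDistrib (fun ω => (S ω, S' ω)) (fun ω => (S' ω, S ω)) μ μ)
    (hS : Measurable S) (hlin : μ[fun ω => S' ω - S ω | MeasurableSpace.comap S inferInstance]
      =ᵐ[μ] fun ω => -lam * S ω + R ω)
    (hS2 : MemLp S 2 μ) (hSR : Integrable (fun ω => S ω * R ω) μ) :
    ∫ ω, (S' ω - S ω) ^ 2 ∂μ = 2 * lam * (∫ ω, S ω ^ 2 ∂μ) - 2 * ∫ ω, S ω * R ω ∂μ := by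
  have hΔ2 : MemLp (fun ω => S' ω - S ω) 2 μ := (memLp_snd_of_exchangeable hexch hS2).sub hS2
  have h := integral_sub_comp_mul_sub_eq hexch hS hlin measurable_id
    (hΔ2.integrable one_le_two) (hS2.integrable_mul hΔ2) (hS2.integrable_mul hS2) hSR
  simpa only [id, ← sq] using h

theorem integral_indicator_Icc_mul_sq_indicator_le [IsFiniteMeasure μ]
    (hexch : IdentDistrib (fun ω => (S ω, S' ω)) (fun ω => (S' ω, S ω)) μ μ)
    (hS : Measurable S) (hlin : μ[fun ω => S' ω - S ω | MeasurableSpace.comap S inferInstance]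
      =ᵐ[μ] fun ω => -lam * S ω + R ω) (hlam : 0 ≤ lam)
    (hSint : Integrable S μ) (hΔ : Integrable (fun ω => S' ω - S ω) μ) (hR : Integrable R μ)
    {a b δ : ℝ} (hab : a - δ ≤ b + δ) :
    ∫ ω, (S' ω - S ω) ^ 2 * (if |S' ω - S ω| ≤ δ then 1 else 0)
        * (if S ω ∈ Icc a b then 1 else 0) ∂μ
      ≤ 2 * ((b - a) / 2 + δ) * (lam * ∫ ω, |S ω| ∂μ + ∫ ω, |R ω| ∂μ) := by
  set f := clampCentered a b δ
  set c := (b - a) / 2 + δ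
  have hf : Measurable f := measurable_clampCentered a b δ
  have hfc : ∀ x, ‖f x‖ ≤ c := abs_clampCentered_le hab
  have hfS : AEStronglyMeasurable (fun ω => f (S ω)) μ := (hf.comp hS).aestronglyMeasurable
  have hfS' : AEStronglyMeasurable (fun ω => f (S' ω)) μ :=
    (hf.comp measurable_fst).comp_aemeasurable hexch.aemeasurable_snd |>.aestronglyMeasurable
  have hdiff : Integrable (fun ω => (f (S' ω) - f (S ω)) * (S' ω - S ω)) μ :=
    hΔ.bdd_mul (hfS'.sub hfS) (c := c + c) (.of_forall fun ω =>
      (norm_sub_le _ _).trans (add_le_add (hfc _) (hfc _)))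
  have hstein := integral_sub_comp_mul_sub_eq hexch hS hlin hf hΔ
    (hΔ.bdd_mul hfS (.of_forall fun ω => hfc _)) (hSint.bdd_mul hfS (.of_forall fun ω => hfc _))
    (hR.bdd_mul hfS (.of_forall fun ω => hfc _))
  calc _ ≤ ∫ ω, (f (S' ω) - f (S ω)) * (S' ω - S ω) ∂μ :=
        integral_mono_of_nonneg (.of_forall fun ω => by positivity) hdiff
          (.of_forall fun ω => sq_mul_indicator_le_of_monotone (monotone_clampCentered a b δ)
            (fun t ht => clampCentered_of_mem_Icc ht) (S ω) (S' ω))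
    _ = 2 * lam * ∫ ω, f (S ω) * S ω ∂μ - 2 * ∫ ω, f (S ω) * R ω ∂μ := hstein
    _ ≤ 2 * c * (lam * ∫ ω, |S ω| ∂μ + ∫ ω, |R ω| ∂μ) := by
        have hS_bound := (abs_le.1 (abs_integral_mul_le (μ := μ) (fun ω => hfc (S ω)) hSint)).2
        have hR_bound := (abs_le.1 (abs_integral_mul_le (μ := μ) (fun ω => hfc (S ω)) hR)).1
        nlinarith

theorem mul_toReal_Icc_sub_sqrt_variance_le [IsProbabilityMeasure μ]
    (hexch : IdentDistrib (fun ω => (S ω, S' ω)) (fun ω => (S' ω, S ω)) μ μ)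
    (hS : Measurable S) (hlin : μ[fun ω => S' ω - S ω | MeasurableSpace.comap S inferInstance]
      =ᵐ[μ] fun ω => -lam * S ω + R ω) (hlam : 0 < lam)
    (hS2 : MemLp S 2 μ) (hR : Integrable R μ) {a b δ : ℝ} (hab : a - δ ≤ b + δ) :
    (∫ ω, 1 / (2 * lam) * (S' ω - S ω) ^ 2 * (if |S' ω - S ω| ≤ δ then 1 else 0) ∂μ)
        * (μ {ω | S ω ∈ Icc a b}).toReal
      - √(Var[μ[fun ω => 1 / (2 * lam) * (S' ω - S ω) ^ 2 * (if |S' ω - S ω| ≤ δ then 1 else 0)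
          | MeasurableSpace.comap S inferInstance]; μ])
      ≤ ((b - a) / 2 + δ) * (∫ ω, |S ω| ∂μ + (∫ ω, |R ω| ∂μ) / lam) := by
  have hind : Measurable fun x : ℝ => if x ∈ Icc a b then (1 : ℝ) else 0 :=
    Measurable.ite measurableSet_Icc measurable_const measurable_const
  have hX : Measurable fun z : ℝ => 1 / (2 * lam) * z ^ 2 * (if |z| ≤ δ then 1 else 0) :=
    (measurable_const.mul (measurable_id.pow_const 2)).mul <| Measurable.ite
      (measurableSet_le measurable_id.abs measurable_const) measurable_const measurable_const
  have hS'2 : MemLp S' 2 μ := memLp_snd_of_exchangeable hexch hS2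
  have hΔ : AEMeasurable (fun ω => S' ω - S ω) μ := (hS'2.sub hS2).aemeasurable
  have hX2 : MemLp (fun ω => 1 / (2 * lam) * (S' ω - S ω) ^ 2
      * (if |S' ω - S ω| ≤ δ then 1 else 0)) 2 μ := by
    refine .of_bound (hX.comp_aemeasurable hΔ).aestronglyMeasurable (1 / (2 * lam) * δ ^ 2)
      (.of_forall fun ω => ?_)
    rw [Real.norm_eq_abs, abs_mul, abs_mul, abs_of_pos (by positivity : 0 < 1 / (2 * lam)),
      abs_of_nonneg (sq_nonneg _)]
    split_ifs with h
    · rw [abs_one, mul_one, ← sq_abs]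
      gcongr
    · simp only [abs_zero, mul_zero]
      positivity
  have hlower := integral_mul_ge_sub_sqrt_variance_condExp hS.comap_le
    (hind.comp (comap_measurable S)).stronglyMeasurable
    (fun ω => by dsimp only [Function.comp_apply]; split_ifs <;> simp) hX2
  have hupper := integral_indicator_Icc_mul_sq_indicator_le hexch hS hlin hlam.le
    (hS2.integrable one_le_two) ((hS'2.sub hS2).integrable one_le_two) hR hab
  rw [Function.comp_def, integral_ite_mem_eq_toReal hS measurableSet_Icc] at hlower
  calc _ ≤ _ := hlower
    _ = 1 / (2 * lam) * ∫ ω, (S' ω - S ω) ^ 2 * (if |S' ω - S ω| ≤ δ then 1 else 0)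
        * (if S ω ∈ Icc a b then 1 else 0) ∂μ := by
      rw [← integral_const_mul]; congr 1 with ω; ring
    _ ≤ 1 / (2 * lam) * (2 * ((b - a) / 2 + δ) * (lam * ∫ ω, |S ω| ∂μ + ∫ ω, |R ω| ∂μ)) := by
      gcongr
    _ = _ := by field_simp

end ExchangeablePair

end

theorem concentration_exchangeable_pair_general
    {Ω : Type*} [MeasureSpace Ω] [IsProbabilityMeasure (ℙ : Measure Ω)]
    (S S' R : Ω → ℝ) (hS : Measurable S)
    (hS2 : MemLp S 2 ℙ)
    (hexch : IdentDistrib (fun ω => (S ω, S' ω)) (fun ω => (S' ω, S ω)) ℙ ℙ)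
    (lam : ℝ) (hlam : 0 < lam)
    (hRint : Integrable R ℙ)
    (hSRint : Integrable (fun ω => S ω * R ω) ℙ)
    (hlin : ℙ[fun ω => S' ω - S ω | MeasurableSpace.comap S inferInstance]
      =ᵐ[ℙ] fun ω => -lam * S ω + R ω)
    (hcube : Integrable (fun ω => |S' ω - S ω| ^ 3) ℙ)
    (δ : ℝ) (hδ : δ = (∫ ω, |S' ω - S ω| ^ 3 ∂ℙ) / lam)
    (D : ℝ)
    (hD : D = ∫ ω, (S ω) ^ 2 ∂ℙ - (∫ ω, |S ω * R ω| ∂ℙ) / lam - 1 / 2)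
    (hDpos : 0 < D) :
    ∀ a b : ℝ, a < b →
      (ℙ {ω | S ω ∈ Set.Icc a b}).toReal
        ≤ ((∫ ω, |S ω| ∂ℙ) + (∫ ω, |R ω| ∂ℙ) / lam) / D * ((b - a) / 2 + δ)
          + (Real.sqrt (variance
              (ℙ[fun ω => (1 / (2 * lam)) * (S' ω - S ω) ^ 2
                    * (if |S' ω - S ω| ≤ δ then (1 : ℝ) else 0)
                  | MeasurableSpace.comap S inferInstance] ) ℙ)) / D := by
  intro a b hab
  have hsecond := integral_sq_sub_eq hexch hS hlin hS2 hSRint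
  have hD_le : D + 1 / 2 ≤ (∫ ω, (S' ω - S ω) ^ 2) / (2 * lam) := by
    have hSR := integral_mono hSRint hSRint.abs fun ω => le_abs_self (S ω * R ω)
    rw [hsecond, hD]
    field_simp
    linarith
  have hδpos : 0 < δ := by
    refine hδ ▸ div_pos (lt_of_le_of_ne (integral_nonneg fun ω => by positivity) fun h => ?_) hlam
    rw [integral_sq_eq_zero_of_integral_abs_pow_three_eq_zero hcube h.symm, zero_div] at hD_le
    linarith
  have hmean := integral_sq_div_sub_half_le_integral_truncated hlam hδpos hδ
    ((memLp_snd_of_exchangeable hexch hS2).sub hS2) hcube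
  have hkey := mul_toReal_Icc_sub_sqrt_variance_le hexch hS hlin hlam hS2 hRint
    (a := a) (b := b) (δ := δ) (by linarith)
  have hP := ENNReal.toReal_nonneg (a := ℙ {ω | S ω ∈ Set.Icc a b})
  rw [div_mul_eq_mul_div, ← add_div, le_div_iff₀ hDpos]
  nlinarith [mul_le_mul_of_nonneg_right ((by linarith : D ≤ _).trans hmean) hP]

/-- **Concentration inequality for exchangeable pairs (Lemma 2.1).**
If `(S, S')` is an exchangeable pair of square-integrable random variables with
`E(S' - S | S) = -λ S + R`, `λ > 0`, and `E S² - E|SR|/λ - 1/2 > 0`, then with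
`δ = E|S' - S|³ / λ`, for all `a < b`,
`P(S ∈ [a,b]) ≤ (E|S| + E|R|/λ)((b-a)/2 + δ)/D + sqrt(Var(E((1/(2λ))(S'-S)² 1{|S'-S|≤δ} | S)))/D`
where `D = E S² - E|SR|/λ - 1/2`. -/
theorem concentration_exchangeable_pair
    {Ω : Type*} [MeasureSpace Ω] [IsProbabilityMeasure (ℙ : Measure Ω)]
    (S S' R : Ω → ℝ) (hS : Measurable S) (hS' : Measurable S')
    (hS2 : MemLp S 2 ℙ) (hS'2 : MemLp S' 2 ℙ)
    (hexch : IdentDistrib (fun ω => (S ω, S' ω)) (fun ω => (S' ω, S ω)) ℙ ℙ)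
    (lam : ℝ) (hlam : 0 < lam)
    (hRint : Integrable R ℙ)
    (hSRint : Integrable (fun ω => S ω * R ω) ℙ)
    (hlin : ℙ[fun ω => S' ω - S ω | MeasurableSpace.comap S inferInstance]
      =ᵐ[ℙ] fun ω => -lam * S ω + R ω)
    (hcube : Integrable (fun ω => |S' ω - S ω| ^ 3) ℙ)
    (δ : ℝ) (hδ : δ = (∫ ω, |S' ω - S ω| ^ 3 ∂ℙ) / lam)
    (D : ℝ)
    (hD : D = ∫ ω, (S ω) ^ 2 ∂ℙ - (∫ ω, |S ω * R ω| ∂ℙ) / lam - 1 / 2)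
    (hDpos : 0 < D) :
    ∀ a b : ℝ, a < b →
      (ℙ {ω | S ω ∈ Set.Icc a b}).toReal
        ≤ ((∫ ω, |S ω| ∂ℙ) + (∫ ω, |R ω| ∂ℙ) / lam) / D * ((b - a) / 2 + δ)
          + (Real.sqrt (variance
              (ℙ[fun ω => (1 / (2 * lam)) * (S' ω - S ω) ^ 2
                    * (if |S' ω - S ω| ≤ δ then (1 : ℝ) else 0)
                  | MeasurableSpace.comap S inferInstance] ) ℙ)) / D :=
  concentration_exchangeable_pair_general S S' R hS hS2 hexch lam hlam hRint hSRint hlin hcube δ hδ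
    D hD hDpos
end

section
/- In the setting of the exchangeable pair (S,S') built from the truncated array (remove the last m rows and columns, m ∈ {2,3,4}, n ≥ 6), with λ = 2/(n−m−1), one has E|S'−S|³ ≤ (64n/((n−m)(n−m−1))) γ, and consequently δ := E|S'−S|³/λ ≤ 32nγ/(n−4), where γ = (1/n) Σ_{i,j=1}^n E|X_ij|³. -/
/-!
Write `D = S' - S`. If `I = J` then `D = 0`; otherwise
`D = X_{Iτ(J)} + X_{Jτ(I)} - X_{Iτ(I)} - X_{Jτ(J)}`, and the power mean inequality gives
`|D|³ ≤ 16 (|X_{Iτ(I)}|³ + |X_{Jτ(J)}|³ + |X_{Iτ(J)}|³ + |X_{Jτ(I)}|³)`.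
Since `(I, J)`, `τ` and `X` are independent and `(I, J)`, `τ` take finitely many values, `E|D|³`
is the average over `(i, j)` and `σ` of `E|D_{i,j,σ}|³`. For uniform `σ`, every
`∑_σ E|X_{a σ(k)}|³` equals `(N-1)! ∑_l E|X_{al}|³` with `N = n - m`, so
`E|D|³ ≤ 64/(N(N-1)) ∑_{a,b ≤ N} E|X_{ab}|³ ≤ 64nγ/(N(N-1))`, and dividing by `λ = 2/(N-1)`
and using `N ≥ n - 4` bounds `δ`.
-/

open MeasureTheory ProbabilityTheory
open scoped ENNReal

/-- The sum `S = ∑_{i ≤ n-m} X_{i τ(i)}` over the array truncated by removing the last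
`m` rows and columns, where `τ` is a permutation of `{1, …, n-m}`. -/
noncomputable def truncS {Ω : Type*} (n m : ℕ) (X : Fin n → Fin n → Ω → ℝ)
    (τ : Ω → Equiv.Perm (Fin (n - m))) (ω : Ω) : ℝ :=
  ∑ i : Fin (n - m),
    X (Fin.castLE (Nat.sub_le n m) i) (Fin.castLE (Nat.sub_le n m) (τ ω i)) ω

/-- `S' = S - X_{I τ(I)} - X_{J τ(J)} + X_{I τ(J)} + X_{J τ(I)}`, where `(I, J) = p`. -/
noncomputable def truncS' {Ω : Type*} (n m : ℕ) (X : Fin n → Fin n → Ω → ℝ)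
    (τ : Ω → Equiv.Perm (Fin (n - m)))
    (p : Ω → Fin (n - m) × Fin (n - m)) (ω : Ω) : ℝ :=
  truncS n m X τ ω
    - X (Fin.castLE (Nat.sub_le n m) (p ω).1)
        (Fin.castLE (Nat.sub_le n m) (τ ω (p ω).1)) ω
    - X (Fin.castLE (Nat.sub_le n m) (p ω).2)
        (Fin.castLE (Nat.sub_le n m) (τ ω (p ω).2)) ω
    + X (Fin.castLE (Nat.sub_le n m) (p ω).1)
        (Fin.castLE (Nat.sub_le n m) (τ ω (p ω).2)) ω
    + X (Fin.castLE (Nat.sub_le n m) (p ω).2)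
        (Fin.castLE (Nat.sub_le n m) (τ ω (p ω).1)) ω

theorem abs_add_sub_sub_pow_three_le (a b c d : ℝ) :
    |a + b - c - d| ^ 3 ≤ 16 * (|a| ^ 3 + |b| ^ 3 + |c| ^ 3 + |d| ^ 3) := by
  have hle : |a + b - c - d| ≤ |a| + |b| + |c| + |d| := by
    have := abs_sub (a + b - c) d; have := abs_sub (a + b) c; have := abs_add_le a b
    linarith
  have hpow := pow_sum_le_card_mul_sum_pow (s := Finset.univ) (f := ![|a|, |b|, |c|, |d|])
    (by simp [Fin.forall_fin_succ, abs_nonneg]) 2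
  norm_num [Fin.sum_univ_four] at hpow
  calc |a + b - c - d| ^ 3 ≤ (|a| + |b| + |c| + |d|) ^ 3 := by gcongr
    _ ≤ 16 * (|a| ^ 3 + |b| ^ 3 + |c| ^ 3 + |d| ^ 3) := hpow

theorem Fintype.sum_comp_le_sum_of_injective {ι κ M : Type*} [Fintype ι] [Fintype κ]
    [AddCommMonoid M] [PartialOrder M] [IsOrderedAddMonoid M] {e : ι → κ}
    (he : Function.Injective e) {f : κ → M} (hf : 0 ≤ f) :
    ∑ i, f (e i) ≤ ∑ k, f k := by
  classical
  rw [← Finset.sum_image fun _ _ _ _ h => he h]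
  exact Finset.sum_le_univ_sum_of_nonneg hf

theorem Fin.sum_prod_castLE_le_sum {k n : ℕ} (h : k ≤ n) {f : Fin n → Fin n → ℝ}
    (hf : ∀ i j, 0 ≤ f i j) :
    ∑ q : Fin k × Fin k, f (Fin.castLE h q.1) (Fin.castLE h q.2) ≤ ∑ i, ∑ j, f i j := by
  rw [← Fintype.sum_prod_type']
  exact Fintype.sum_comp_le_sum_of_injective
    ((Fin.castLE_injective h).prodMap (Fin.castLE_injective h)) (f := fun x => f x.1 x.2)
    fun x => hf x.1 x.2

theorem Equiv.Perm.sum_comp_apply_eq_factorial_mul {α : Type*} [Fintype α] [DecidableEq α]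
    (i : α) (f : α → ℝ) :
    ∑ σ : Equiv.Perm α, f (σ i) = (Fintype.card α - 1).factorial * ∑ k, f k := by
  have hswap : ∀ k, ∑ σ : Equiv.Perm α, f (σ k) = ∑ σ : Equiv.Perm α, f (σ i) := fun k => by
    simpa using Equiv.sum_comp (Equiv.mulRight (Equiv.swap i k)) fun σ : Equiv.Perm α => f (σ i)
  have hcard : 0 < Fintype.card α := Fintype.card_pos_iff.mpr ⟨i⟩
  have htotal : (Fintype.card α : ℝ) * ∑ σ : Equiv.Perm α, f (σ i)
      = (Fintype.card α).factorial * ∑ k, f k := by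
    calc (Fintype.card α : ℝ) * ∑ σ : Equiv.Perm α, f (σ i)
        = ∑ k, ∑ σ : Equiv.Perm α, f (σ k) := by simp [hswap]
      _ = ∑ σ : Equiv.Perm α, ∑ k, f k :=
          Finset.sum_comm.trans (Finset.sum_congr rfl fun σ _ => Equiv.sum_comp σ f)
      _ = (Fintype.card α).factorial * ∑ k, f k := by simp [Fintype.card_perm]
  rw [← Nat.mul_factorial_pred hcard.ne', Nat.cast_mul, mul_assoc] at htotal
  exact mul_left_cancel₀ (by positivity) htotal

theorem sum_indicator_setOf_eq_apply {Ω β M : Type*} [Fintype β] [AddCommMonoid M] (Y : Ω → β)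
    (F : β → Ω → M) (ω : Ω) : ∑ b, {ω | Y ω = b}.indicator (F b) ω = F (Y ω) ω := by
  classical
  simp [Set.indicator_apply]

section FiniteIndex

variable {Ω β : Type*} [MeasurableSpace Ω] {μ : Measure Ω} [Fintype β] [MeasurableSpace β]
  [MeasurableSingletonClass β] {Y : Ω → β}

theorem integrable_of_finite_index (hY : Measurable Y) {F : β → Ω → ℝ}
    (hF : ∀ b, Integrable (F b) μ) : Integrable (fun ω => F (Y ω) ω) μ := by
  simp_rw [← sum_indicator_setOf_eq_apply Y F]
  exact integrable_finsetSum _ fun b _ => (hF b).indicator (hY (measurableSet_singleton b))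

theorem ProbabilityTheory.IndepFun.integral_eq_sum_measureReal_mul {γ : Type*}
    [MeasurableSpace γ] {Z : Ω → γ} (hYZ : IndepFun Y Z μ) (hY : Measurable Y)
    {F : β → γ → ℝ} (hF : ∀ b, Measurable (F b))
    (hFi : ∀ b, Integrable (fun ω => F b (Z ω)) μ) :
    ∫ ω, F (Y ω) (Z ω) ∂μ = ∑ b, μ.real {ω | Y ω = b} * ∫ ω, F b (Z ω) ∂μ := by
  have hYb : ∀ b, MeasurableSet {ω | Y ω = b} := fun b => hY (measurableSet_singleton b)
  simp_rw [← sum_indicator_setOf_eq_apply Y (fun b ω => F b (Z ω))]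
  rw [integral_finsetSum _ fun b _ => (hFi b).indicator (hYb b)]
  refine Finset.sum_congr rfl fun b _ => ?_
  have hb : Measurable (({b} : Set β).indicator (1 : β → ℝ)) :=
    measurable_one.indicator (measurableSet_singleton b)
  have hind : {ω | Y ω = b}.indicator (fun ω => F b (Z ω))
      = fun ω => ({b} : Set β).indicator 1 (Y ω) * F b (Z ω) := by
    ext ω; by_cases h : Y ω = b <;> simp [h]
  rw [hind, ← integral_indicator_one (hYb b)]
  exact (hYZ.comp hb (hF b)).integral_fun_mul_eq_mul_integral
    (hb.comp hY).aestronglyMeasurable (hFi b).aestronglyMeasurable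

end FiniteIndex

theorem MeasureTheory.MemLp.integrable_abs_pow_three {Ω : Type*} [MeasurableSpace Ω]
    {μ : Measure Ω} {f : Ω → ℝ} (hf : MemLp f 3 μ) : Integrable (fun ω => |f ω| ^ 3) μ := by
  simpa [Real.norm_eq_abs] using hf.integrable_norm_pow (p := 3) three_ne_zero

noncomputable def swapIncrement {α : Type*} (x : α × α → ℝ) (σ : Equiv.Perm α) (q : α × α) : ℝ :=
  x (q.1, σ q.2) + x (q.2, σ q.1) - x (q.1, σ q.1) - x (q.2, σ q.2)

theorem swapIncrement_self {α : Type*} (x : α × α → ℝ) (σ : Equiv.Perm α) (i : α) :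
    swapIncrement x σ (i, i) = 0 := by
  simp [swapIncrement]

theorem measurable_abs_swapIncrement_pow_three {α : Type*} (σ : Equiv.Perm α) (q : α × α) :
    Measurable fun x : α × α → ℝ => |swapIncrement x σ q| ^ 3 := by
  unfold swapIncrement
  fun_prop

theorem memLp_swapIncrement {α Ω : Type*} [MeasurableSpace Ω] {μ : Measure Ω}
    {Z : Ω → α × α → ℝ} (hZ : ∀ q, MemLp (fun ω => Z ω q) 3 μ) (σ : Equiv.Perm α)
    (q : α × α) : MemLp (fun ω => swapIncrement (Z ω) σ q) 3 μ :=
  (((hZ _).add (hZ _)).sub (hZ _)).sub (hZ _)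

section UniformShuffle

variable {α Ω : Type*} [Fintype α] [MeasurableSpace (Equiv.Perm α)]
  [MeasurableSingletonClass (Equiv.Perm α)] [MeasurableSpace Ω] {μ : Measure Ω}
  {Z : Ω → α × α → ℝ} {τ : Ω → Equiv.Perm α}

theorem integral_abs_swapIncrement_pow_three_le (hZ : ∀ q, MemLp (fun ω => Z ω q) 3 μ)
    (hτ : Measurable τ)
    (hτunif : ∀ σ, μ {ω | τ ω = σ} = 1 / ((Fintype.card α).factorial : ℝ≥0∞))
    (hτZ : IndepFun τ Z μ) (q : α × α) :
    ∫ ω, |swapIncrement (Z ω) (τ ω) q| ^ 3 ∂μ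
      ≤ 32 / Fintype.card α
        * (∑ b, ∫ ω, |Z ω (q.1, b)| ^ 3 ∂μ + ∑ b, ∫ ω, |Z ω (q.2, b)| ^ 3 ∂μ) := by
  classical
  set e : α × α → ℝ := fun q => ∫ ω, |Z ω q| ^ 3 ∂μ
  have he : ∀ q, Integrable (fun ω => |Z ω q| ^ 3) μ := fun q => (hZ q).integrable_abs_pow_three
  have hmoment : ∀ σ : Equiv.Perm α, ∫ ω, |swapIncrement (Z ω) σ q| ^ 3 ∂μ
      ≤ 16 * (e (q.1, σ q.2) + e (q.2, σ q.1) + e (q.1, σ q.1) + e (q.2, σ q.2)) := by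
    intro σ
    calc ∫ ω, |swapIncrement (Z ω) σ q| ^ 3 ∂μ
        ≤ ∫ ω, 16 * (|Z ω (q.1, σ q.2)| ^ 3 + |Z ω (q.2, σ q.1)| ^ 3
            + |Z ω (q.1, σ q.1)| ^ 3 + |Z ω (q.2, σ q.2)| ^ 3) ∂μ :=
          integral_mono (memLp_swapIncrement hZ σ q).integrable_abs_pow_three
            (((((he _).add (he _)).add (he _)).add (he _)).const_mul 16)
            fun ω => abs_add_sub_sub_pow_three_le _ _ _ _
      _ = 16 * (e (q.1, σ q.2) + e (q.2, σ q.1) + e (q.1, σ q.1) + e (q.2, σ q.2)) := by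
          rw [integral_const_mul, integral_add ?_ (he _), integral_add ?_ (he _),
            integral_add (he _) (he _)]
          exacts [(he _).add (he _), ((he _).add (he _)).add (he _)]
  have hcard : 0 < Fintype.card α := Fintype.card_pos_iff.mpr ⟨q.1⟩
  rw [hτZ.integral_eq_sum_measureReal_mul hτ (F := fun σ x => |swapIncrement x σ q| ^ 3)
    (fun σ => measurable_abs_swapIncrement_pow_three σ q)
    (fun σ => (memLp_swapIncrement hZ σ q).integrable_abs_pow_three)]
  calc ∑ σ, μ.real {ω | τ ω = σ} * ∫ ω, |swapIncrement (Z ω) σ q| ^ 3 ∂μ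
      ≤ ∑ σ : Equiv.Perm α, 1 / ((Fintype.card α).factorial : ℝ)
          * (16 * (e (q.1, σ q.2) + e (q.2, σ q.1) + e (q.1, σ q.1) + e (q.2, σ q.2))) := by
        refine Finset.sum_le_sum fun σ _ => ?_
        rw [measureReal_def, hτunif σ, ENNReal.toReal_div, ENNReal.toReal_one,
          ENNReal.toReal_natCast]
        gcongr
        exact hmoment σ
    _ = 32 / Fintype.card α
        * (∑ b, ∫ ω, |Z ω (q.1, b)| ^ 3 ∂μ + ∑ b, ∫ ω, |Z ω (q.2, b)| ^ 3 ∂μ) := by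
        simp only [← Finset.mul_sum, Finset.sum_add_distrib,
          Equiv.Perm.sum_comp_apply_eq_factorial_mul _ (fun k => e (q.1, k)),
          Equiv.Perm.sum_comp_apply_eq_factorial_mul _ (fun k => e (q.2, k))]
        rw [← Nat.mul_factorial_pred hcard.ne', Nat.cast_mul]
        field_simp
        ring

theorem integral_abs_swapIncrement_pow_three_le_of_uniform_pair [MeasurableSpace α]
    [MeasurableSingletonClass α] (hZ : ∀ q, MemLp (fun ω => Z ω q) 3 μ) (hτ : Measurable τ)
    (hτunif : ∀ σ, μ {ω | τ ω = σ} = 1 / ((Fintype.card α).factorial : ℝ≥0∞))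
    (hτZ : IndepFun τ Z μ) {p : Ω → α × α} (hp : Measurable p)
    (hpunif : ∀ i j : α, i ≠ j →
      μ {ω | p ω = (i, j)} = 1 / ((Fintype.card α * (Fintype.card α - 1) : ℕ) : ℝ≥0∞))
    (hpZτ : IndepFun p (fun ω => (Z ω, τ ω)) μ) :
    ∫ ω, |swapIncrement (Z ω) (τ ω) (p ω)| ^ 3 ∂μ
      ≤ 64 / (Fintype.card α * (Fintype.card α - 1)) * ∑ q, ∫ ω, |Z ω q| ^ 3 ∂μ := by
  classical
  set N : ℝ := (Fintype.card α : ℝ)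
  set R : α → ℝ := fun a => ∑ b, ∫ ω, |Z ω (a, b)| ^ 3 ∂μ
  have hR : ∀ a, 0 ≤ R a := fun a =>
    Finset.sum_nonneg fun b _ => integral_nonneg fun ω => by positivity
  have hterm : ∀ q : α × α, μ.real {ω | p ω = q} * ∫ ω, |swapIncrement (Z ω) (τ ω) q| ^ 3 ∂μ
      ≤ 1 / (N * (N - 1)) * (32 / N * (R q.1 + R q.2)) := by
    rintro ⟨i, j⟩
    have hN : 1 ≤ N := Nat.one_le_cast.mpr (Fintype.card_pos_iff.mpr ⟨i⟩)
    by_cases hij : i = j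
    · subst hij
      simp only [swapIncrement_self, abs_zero, ne_eq, OfNat.ofNat_ne_zero, not_false_eq_true,
        zero_pow, integral_zero, mul_zero]
      have := hR i
      have : 0 ≤ N - 1 := by linarith
      positivity
    · rw [measureReal_def, hpunif i j hij, ENNReal.toReal_div, ENNReal.toReal_one,
        ENNReal.toReal_natCast, Nat.cast_mul, Nat.cast_sub (Fintype.card_pos_iff.mpr ⟨i⟩),
        Nat.cast_one]
      have : 0 ≤ N - 1 := by linarith
      exact mul_le_mul_of_nonneg_left
        (integral_abs_swapIncrement_pow_three_le hZ hτ hτunif hτZ (i, j))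
        (by positivity : (0 : ℝ) ≤ 1 / (N * (N - 1)))
  rw [hpZτ.integral_eq_sum_measureReal_mul hp
    (F := fun q (y : (α × α → ℝ) × Equiv.Perm α) => |swapIncrement y.1 y.2 q| ^ 3)
    (fun q => measurable_from_prod_countable_left
      fun σ => measurable_abs_swapIncrement_pow_three σ q)
    (fun q => integrable_of_finite_index hτ
      fun σ => (memLp_swapIncrement hZ σ q).integrable_abs_pow_three)]
  calc _ ≤ ∑ q : α × α, 1 / (N * (N - 1)) * (32 / N * (R q.1 + R q.2)) :=
        Finset.sum_le_sum fun q _ => hterm q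
    _ = 64 / (N * (N - 1)) * ∑ q, ∫ ω, |Z ω q| ^ 3 ∂μ := by
        rcases isEmpty_or_nonempty α with hα | hα
        · simp
        have hN : N ≠ 0 := Nat.cast_ne_zero.mpr Fintype.card_ne_zero
        simp only [R, ← Finset.mul_sum, Fintype.sum_prod_type, Finset.sum_add_distrib,
          Finset.sum_const, Finset.card_univ, nsmul_eq_mul]
        field_simp
        ring

end UniformShuffle

theorem truncS'_sub_truncS {Ω : Type*} (n m : ℕ) (X : Fin n → Fin n → Ω → ℝ)
    (τ : Ω → Equiv.Perm (Fin (n - m))) (p : Ω → Fin (n - m) × Fin (n - m)) (ω : Ω) :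
    truncS' n m X τ p ω - truncS n m X τ ω
      = swapIncrement (fun q => X (Fin.castLE (Nat.sub_le n m) q.1)
          (Fin.castLE (Nat.sub_le n m) q.2) ω) (τ ω) (p ω) := by
  simp only [truncS', swapIncrement]
  ring

theorem div_two_div_sub_one_le_of_le {n m a I : ℝ} (hm : m ≤ 4) (hn : 4 < n) (hnm : m + 1 < n)
    (ha : 0 ≤ a) (hI : I ≤ 64 * a / ((n - m) * (n - m - 1))) :
    I / (2 / (n - m - 1)) ≤ 32 * a / (n - 4) := by
  have hnm' : 0 < n - m - 1 := by linarith
  calc I / (2 / (n - m - 1)) ≤ 64 * a / ((n - m) * (n - m - 1)) / (2 / (n - m - 1)) := by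
        gcongr
    _ = 32 * a / (n - m) := by
        field_simp
        ring
    _ ≤ 32 * a / (n - 4) := by gcongr

theorem truncated_sum_increment_third_moment_general
    {Ω : Type*} [MeasureSpace Ω]
    (n m : ℕ) (hn : 6 ≤ n) (hm : m = 2 ∨ m = 3 ∨ m = 4)
    (X : Fin n → Fin n → Ω → ℝ)
    (hmom : ∀ i j, MemLp (X i j) 3 ℙ)
    (τ : Ω → Equiv.Perm (Fin (n - m))) (hτmeas : Measurable τ)
    (hτunif : ∀ σ : Equiv.Perm (Fin (n - m)),
      ℙ {ω | τ ω = σ} = 1 / ((n - m).factorial : ℝ≥0∞))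
    (hτindep : IndepFun τ (fun ω (q : Fin n × Fin n) => X q.1 q.2 ω) ℙ)
    (p : Ω → Fin (n - m) × Fin (n - m)) (hpmeas : Measurable p)
    (hpunif : ∀ i j : Fin (n - m), i ≠ j →
      ℙ {ω | p ω = (i, j)} = 1 / (((n - m) * (n - m - 1) : ℕ) : ℝ≥0∞))
    (hpindep : IndepFun p
      (fun ω => ((fun q : Fin n × Fin n => X q.1 q.2 ω), τ ω)) ℙ)
    (γ : ℝ) (hγ : γ = (1 / (n : ℝ)) * ∑ i, ∑ j, ∫ ω, |X i j ω| ^ 3 ∂ℙ) :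
    (∫ ω, |truncS' n m X τ p ω - truncS n m X τ ω| ^ 3 ∂ℙ
        ≤ (64 * n / (((n : ℝ) - m) * ((n : ℝ) - m - 1))) * γ)
    ∧ (∫ ω, |truncS' n m X τ p ω - truncS n m X τ ω| ^ 3 ∂ℙ) / (2 / ((n : ℝ) - m - 1))
        ≤ 32 * n * γ / ((n : ℝ) - 4) := by
  set c := Fin.castLE (Nat.sub_le n m)
  set restrict : (Fin n × Fin n → ℝ) → Fin (n - m) × Fin (n - m) → ℝ :=
    fun x q => x (c q.1, c q.2)
  have hrestrict : Measurable restrict := measurable_pi_lambda _ fun q => measurable_pi_apply _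
  have hbound := integral_abs_swapIncrement_pow_three_le_of_uniform_pair
    (Z := fun ω => restrict fun q => X q.1 q.2 ω) (fun q => hmom _ _) hτmeas
    (by simpa using hτunif) (hτindep.comp measurable_id hrestrict) hpmeas
    (by simpa using hpunif) (hpindep.comp measurable_id (hrestrict.prodMap measurable_id))
  simp only [Fintype.card_fin, Nat.cast_sub (show m ≤ n by omega)] at hbound
  have hmoments : ∑ q : Fin (n - m) × Fin (n - m), ∫ ω, |X (c q.1) (c q.2) ω| ^ 3 ∂ℙ
      ≤ n * γ := by
    rw [hγ, ← mul_assoc, mul_one_div_cancel (by positivity), one_mul]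
    exact Fin.sum_prod_castLE_le_sum (f := fun i j => ∫ ω, |X i j ω| ^ 3 ∂ℙ) _
      fun i j => integral_nonneg fun ω => by positivity
  have hm4 : (m : ℝ) ≤ 4 := by rcases hm with rfl | rfl | rfl <;> norm_num
  have hn6 : (6 : ℝ) ≤ n := by exact_mod_cast hn
  have hA : 0 < ((n : ℝ) - m) * ((n : ℝ) - m - 1) := by nlinarith
  have hthird : ∫ ω, |truncS' n m X τ p ω - truncS n m X τ ω| ^ 3 ∂ℙ
      ≤ 64 * (n * γ) / (((n : ℝ) - m) * ((n : ℝ) - m - 1)) := by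
    simp only [truncS'_sub_truncS]
    refine (hbound.trans (mul_le_mul_of_nonneg_left hmoments (by positivity))).trans_eq ?_
    ring
  have hnγ : 0 ≤ (n : ℝ) * γ := hmoments.trans' <| Finset.sum_nonneg fun q _ =>
    integral_nonneg fun ω => by positivity
  exact ⟨hthird.trans_eq (by ring),
    (div_two_div_sub_one_le_of_le hm4 (by linarith) (by linarith) hnγ hthird).trans_eq (by ring)⟩

/-- **Third-moment bound for the increment of the truncated exchangeable pair
(equation (2.22)):** `E|S' - S|³ ≤ (64n/((n-m)(n-m-1))) γ` and consequently
`δ = E|S' - S|³ / λ ≤ 32 n γ / (n - 4)`, where `λ = 2/(n-m-1)`. -/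
theorem truncated_sum_increment_third_moment
    {Ω : Type*} [MeasureSpace Ω] [IsProbabilityMeasure (ℙ : Measure Ω)]
    (n m : ℕ) (hn : 6 ≤ n) (hm : m = 2 ∨ m = 3 ∨ m = 4)
    (X : Fin n → Fin n → Ω → ℝ)
    (hmeas : ∀ i j, Measurable (X i j))
    (hmom : ∀ i j, MemLp (X i j) 3 ℙ)
    (hindep : iIndepFun (fun q : Fin n × Fin n => X q.1 q.2) ℙ)
    (τ : Ω → Equiv.Perm (Fin (n - m))) (hτmeas : Measurable τ)
    (hτunif : ∀ σ : Equiv.Perm (Fin (n - m)),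
      ℙ {ω | τ ω = σ} = 1 / ((n - m).factorial : ℝ≥0∞))
    (hτindep : IndepFun τ (fun ω (q : Fin n × Fin n) => X q.1 q.2 ω) ℙ)
    (p : Ω → Fin (n - m) × Fin (n - m)) (hpmeas : Measurable p)
    (hpunif : ∀ i j : Fin (n - m), i ≠ j →
      ℙ {ω | p ω = (i, j)} = 1 / (((n - m) * (n - m - 1) : ℕ) : ℝ≥0∞))
    (hpindep : IndepFun p
      (fun ω => ((fun q : Fin n × Fin n => X q.1 q.2 ω), τ ω)) ℙ)
    (γ : ℝ) (hγ : γ = (1 / (n : ℝ)) * ∑ i, ∑ j, ∫ ω, |X i j ω| ^ 3 ∂ℙ) :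
    (∫ ω, |truncS' n m X τ p ω - truncS n m X τ ω| ^ 3 ∂ℙ
        ≤ (64 * n / (((n : ℝ) - m) * ((n : ℝ) - m - 1))) * γ)
    ∧ (∫ ω, |truncS' n m X τ p ω - truncS n m X τ ω| ^ 3 ∂ℙ) / (2 / ((n : ℝ) - m - 1))
        ≤ 32 * n * γ / ((n : ℝ) - 4) :=
  truncated_sum_increment_third_moment_general n m hn hm X hmom τ hτmeas hτunif hτindep p hpmeas
    hpunif hpindep γ hγ
end

section
/- Let X = {X_ij : 1 ≤ i,j ≤ n} be an n×n array of independent real random variables with n ≥ 2, all row and column sums of the means zero, let π be a uniform random permutation of {1,…,n} independent of X, W = Σ_{i=1}^n X_{iπ(i)}, let (I,J) be a uniform pair of distinct indices in {1,…,n} independent of X and π, and W' = W − X_{Iπ(I)} − X_{Jπ(J)} + X_{Iπ(J)} + X_{Jπ(I)}. Then (W,W') is an exchangeable pair and E(W'−W | W) = −λW + R with λ = 2/(n−1) and R = (2/(n(n−1))) E( Σ_{i,j=1}^n X_ij | W ). -/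
/-!
Write `Y = (X_{ij})` and `V = (Y, π)`. Then `W = ∑ᵢ Y_{i, π i}` and, by the transposition formula,
`W' = ∑ᵢ Y_{i, (π * swap I J) i}`. Since `π` is uniform and independent of `Y`, the law of `(Y, π)`
is invariant under `π ↦ π * τ` for each fixed `τ`; as `(I, J)` is independent of `V`, replacing `π`
by `π * swap I J` on each event `{(I, J) = q}` exchanges `W` and `W'`.

Conditioning on `V` averages over the independent pair `(I, J)`, so `E(W' - W | V)` is
`1/(n(n-1))` times the sum over all pairs of the change caused by one transposition; that sum is
`2 ∑ᵢⱼ X_{ij} - 2n W`. The tower property, from `σ(V)` down to `σ(W)`, gives the claim.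
-/

open MeasureTheory ProbabilityTheory
open scoped ENNReal

/-- The combinatorial sum `W = ∑ i, X_{i π(i)}`. -/
noncomputable def permSum {Ω : Type*} (n : ℕ) (X : Fin n → Fin n → Ω → ℝ)
    (π : Ω → Equiv.Perm (Fin n)) (ω : Ω) : ℝ :=
  ∑ i, X i (π ω i) ω

/-- `W' = W - X_{I π(I)} - X_{J π(J)} + X_{I π(J)} + X_{J π(I)}`, where `(I, J) = p`. -/
noncomputable def permSum' {Ω : Type*} (n : ℕ) (X : Fin n → Fin n → Ω → ℝ)
    (π : Ω → Equiv.Perm (Fin n)) (p : Ω → Fin n × Fin n) (ω : Ω) : ℝ :=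
  permSum n X π ω
    - X (p ω).1 (π ω (p ω).1) ω - X (p ω).2 (π ω (p ω).2) ω
    + X (p ω).1 (π ω (p ω).2) ω + X (p ω).2 (π ω (p ω).1) ω

namespace Equiv.Perm

variable {ι M : Type*} [Fintype ι]

def arraySum [AddCommMonoid M] (σ : Perm ι) (x : ι × ι → M) : M :=
  ∑ i, x (i, σ i)

theorem measurable_arraySum_uncurry [MeasurableSpace (Perm ι)] [MeasurableSingletonClass (Perm ι)]
    [AddCommMonoid M] [MeasurableSpace M] [MeasurableAdd₂ M] :
    Measurable fun v : (ι × ι → M) × Perm ι => v.2.arraySum v.1 :=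
  measurable_from_prod_countable_left fun σ =>
    Finset.measurable_sum _ fun i _ => measurable_pi_apply (i, σ i)

variable [DecidableEq ι] [AddCommGroup M]

theorem arraySum_mul_swap (σ : Perm ι) (i j : ι) (x : ι × ι → M) :
    arraySum (σ * swap i j) x
      = arraySum σ x - x (i, σ i) - x (j, σ j) + x (i, σ j) + x (j, σ i) := by
  rcases eq_or_ne i j with rfl | hij
  · simp only [swap_self, Perm.mul_def]
    abel
  have hdiff : arraySum (σ * swap i j) x - arraySum σ x
      = (x (i, σ j) - x (i, σ i)) + (x (j, σ i) - x (j, σ j)) := by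
    rw [arraySum, arraySum, ← Finset.sum_sub_distrib,
      Fintype.sum_eq_add i j hij fun k hk => by simp [swap_apply_of_ne_of_ne hk.1 hk.2]]
    simp [swap_apply_left, swap_apply_right]
  rw [sub_eq_iff_eq_add'.mp hdiff]
  abel

theorem sum_arraySum_mul_swap_sub (σ : Perm ι) (x : ι × ι → M) :
    ∑ q : ι × ι, (arraySum (σ * swap q.1 q.2) x - arraySum σ x)
      = 2 • ∑ i, ∑ j, x (i, j) - (2 * Fintype.card ι) • arraySum σ x := by
  have hrow : ∀ i, ∑ j, x (i, σ j) = ∑ k, x (i, k) := fun i =>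
    Equiv.sum_comp σ fun k => x (i, k)
  have hcol : ∑ i, ∑ j, x (j, σ i) = ∑ i, ∑ j, x (i, j) := by
    rw [Equiv.sum_comp σ fun k => ∑ j, x (j, k), Finset.sum_comm]
  simp only [arraySum_mul_swap, Fintype.sum_prod_type]
  simp only [Finset.sum_add_distrib, Finset.sum_sub_distrib, hrow, hcol, Finset.sum_const,
    Finset.card_univ, arraySum]
  rw [← Finset.smul_sum, two_mul, add_nsmul]
  abel

theorem sum_mul_arraySum_mul_swap_sub_of_uniform (hcard : 2 ≤ Fintype.card ι) {w : ι × ι → ℝ}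
    (hw : ∀ q : ι × ι, q.1 ≠ q.2 →
      w q = ((Fintype.card ι * (Fintype.card ι - 1) : ℕ) : ℝ)⁻¹)
    (σ : Perm ι) (x : ι × ι → ℝ) :
    ∑ q : ι × ι, w q * (arraySum (σ * swap q.1 q.2) x - arraySum σ x)
      = -(2 / ((Fintype.card ι : ℝ) - 1)) * arraySum σ x
        + 2 / ((Fintype.card ι : ℝ) * ((Fintype.card ι : ℝ) - 1)) * ∑ i, ∑ j, x (i, j) := by
  have hweight : ∀ q : ι × ι, w q * (arraySum (σ * swap q.1 q.2) x - arraySum σ x)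
      = ((Fintype.card ι * (Fintype.card ι - 1) : ℕ) : ℝ)⁻¹
        * (arraySum (σ * swap q.1 q.2) x - arraySum σ x) := by
    intro q
    rcases eq_or_ne q.1 q.2 with hq | hq
    · simp only [hq, swap_self, Perm.mul_def, refl_trans, sub_self, mul_zero]
    · rw [hw q hq]
  have hn : (2 : ℝ) ≤ Fintype.card ι := by exact_mod_cast hcard
  rw [Finset.sum_congr rfl fun q _ => hweight q, ← Finset.mul_sum, sum_arraySum_mul_swap_sub,
    nsmul_eq_mul, nsmul_eq_mul, Nat.cast_mul, Nat.cast_sub (by omega), Nat.cast_one]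
  have : (Fintype.card ι : ℝ) - 1 ≠ 0 := by linarith
  field_simp
  push_cast
  ring

end Equiv.Perm

theorem Measurable.apply_index {Ω ι E β : Type*} [MeasurableSpace Ω] [MeasurableSpace ι]
    [Countable ι] [MeasurableSingletonClass ι] [MeasurableSpace E] [MeasurableSpace β]
    {p : Ω → ι} {V : Ω → E} {Ψ : ι → E → β} (hΨ : ∀ q, Measurable (Ψ q)) (hp : Measurable p)
    (hV : Measurable V) : Measurable fun ω => Ψ (p ω) (V ω) :=
  (measurable_from_prod_countable_right (f := fun z : ι × E => Ψ z.1 z.2) hΨ).comp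
    (hp.prodMk hV)

theorem MeasureTheory.Integrable.apply_index {Ω ι E : Type*} [MeasurableSpace Ω] {μ : Measure Ω}
    [Fintype ι] [MeasurableSpace ι] [MeasurableSingletonClass ι] [NormedAddCommGroup E]
    {f : ι → Ω → E} (hf : ∀ i, Integrable (f i) μ) {κ : Ω → ι} (hκ : Measurable κ) :
    Integrable (fun ω => f (κ ω) ω) μ := by
  classical
  have hsum : (fun ω => f (κ ω) ω) = fun ω => ∑ i, (κ ⁻¹' {i}).indicator (f i) ω := by
    funext ω
    simp only [Set.indicator_apply, Set.mem_preimage, Set.mem_singleton_iff]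
    rw [Finset.sum_ite_eq Finset.univ (κ ω) (fun i => f i ω), if_pos (Finset.mem_univ _)]
  rw [hsum]
  exact integrable_finsetSum _ fun i _ => (hf i).indicator (hκ (measurableSet_singleton i))

theorem ProbabilityTheory.identDistrib_prod_mul_right_of_uniform {Ω E G : Type*}
    [MeasurableSpace Ω] {μ : Measure Ω} [IsFiniteMeasure μ] [MeasurableSpace E] [Group G]
    [Countable G] [MeasurableSpace G] [DiscreteMeasurableSpace G] {Y : Ω → E} {π : Ω → G}
    (hY : Measurable Y) (hπ : Measurable π) (hind : IndepFun Y π μ) {c : ℝ≥0∞}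
    (hunif : ∀ g, μ (π ⁻¹' {g}) = c) (τ : G) :
    IdentDistrib (fun ω => (Y ω, π ω * τ)) (fun ω => (Y ω, π ω)) μ μ := by
  have hπτ : Measurable fun ω => π ω * τ := hπ.mul_const τ
  have hindτ : IndepFun Y (fun ω => π ω * τ) μ := hind.comp measurable_id (measurable_mul_const τ)
  have hlaw : μ.map (fun ω => π ω * τ) = μ.map π := by
    refine Measure.ext_iff_singleton.mpr fun g => ?_
    have hpre : (fun ω => π ω * τ) ⁻¹' {g} = π ⁻¹' {g * τ⁻¹} := by
      ext ω
      simp [eq_mul_inv_iff_mul_eq]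
    rw [Measure.map_apply hπτ (measurableSet_singleton g),
      Measure.map_apply hπ (measurableSet_singleton g), hpre, hunif, hunif]
  refine ⟨(hY.prodMk hπτ).aemeasurable, (hY.prodMk hπ).aemeasurable, ?_⟩
  rw [hindτ.map_prod_eq_prod_map_map hY.aemeasurable hπτ.aemeasurable,
    hind.map_prod_eq_prod_map_map hY.aemeasurable hπ.aemeasurable, hlaw]

namespace ProbabilityTheory.IndepFun

variable {Ω ι E : Type*} [MeasurableSpace Ω] {μ : Measure Ω} [Fintype ι] [MeasurableSpace ι]
  [MeasurableSingletonClass ι] [MeasurableSpace E] {p : Ω → ι} {V : Ω → E}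

theorem map_eq_sum_smul_map {β : Type*} [MeasurableSpace β] (hind : IndepFun p V μ)
    (hp : Measurable p) (hV : Measurable V) {Ψ : ι → E → β} (hΨ : ∀ q, Measurable (Ψ q)) :
    μ.map (fun ω => Ψ (p ω) (V ω)) = ∑ q, μ (p ⁻¹' {q}) • μ.map (fun ω => Ψ q (V ω)) := by
  ext A hA
  have hpartition : (fun ω => Ψ (p ω) (V ω)) ⁻¹' A = ⋃ q, p ⁻¹' {q} ∩ V ⁻¹' (Ψ q ⁻¹' A) := by
    ext ω
    simp
  rw [Measure.map_apply (Measurable.apply_index hΨ hp hV) hA, hpartition, measure_iUnion,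
    tsum_fintype, Measure.coe_finsetSum, Finset.sum_apply]
  · refine Finset.sum_congr rfl fun q _ => ?_
    rw [hind.measure_inter_preimage_eq_mul _ _ (measurableSet_singleton q) (hΨ q hA),
      Measure.smul_apply, Measure.map_apply (f := fun ω => Ψ q (V ω)) ((hΨ q).comp hV) hA,
      smul_eq_mul]
    rfl
  · exact fun q q' hqq' => Disjoint.mono Set.inter_subset_left Set.inter_subset_left
      ((Set.disjoint_singleton.mpr hqq').preimage p)
  · exact fun q => (hp (measurableSet_singleton q)).inter (hV (hΨ q hA))

variable [IsFiniteMeasure μ]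

theorem integral_eq_sum_mul_integral (hind : IndepFun p V μ) (hp : Measurable p)
    (hV : Measurable V) {g : ι → E → ℝ} (hg : ∀ q, Measurable (g q))
    (hgint : ∀ q, Integrable (fun ω => g q (V ω)) μ) :
    ∫ ω, g (p ω) (V ω) ∂μ = ∑ q, μ.real (p ⁻¹' {q}) * ∫ ω, g q (V ω) ∂μ := by
  have hint : ∀ q, Integrable (fun y => y) (μ.map fun ω => g q (V ω)) := fun q =>
    (integrable_map_measure aestronglyMeasurable_id ((hg q).comp hV).aemeasurable).mpr (hgint q)
  rw [← integral_map (Measurable.apply_index hg hp hV).aemeasurable aestronglyMeasurable_id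
      (f := fun y => y), hind.map_eq_sum_smul_map hp hV hg,
    integral_finsetSum_measure fun q _ => (hint q).smul_measure (measure_ne_top _ _)]
  refine Finset.sum_congr rfl fun q _ => ?_
  rw [integral_smul_measure, integral_map (φ := fun ω => g q (V ω)) (f := fun y => y)
      ((hg q).comp hV).aemeasurable aestronglyMeasurable_id, smul_eq_mul, measureReal_def]

theorem condExp_comap_ae_eq_sum (hind : IndepFun p V μ) (hp : Measurable p)
    (hV : Measurable V) {g : ι → E → ℝ} (hg : ∀ q, Measurable (g q))
    (hgint : ∀ q, Integrable (fun ω => g q (V ω)) μ) :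
    μ[fun ω => g (p ω) (V ω) | MeasurableSpace.comap V ‹_›]
      =ᵐ[μ] fun ω => ∑ q, μ.real (p ⁻¹' {q}) * g q (V ω) := by
  have hsum_meas : Measurable fun v => ∑ q, μ.real (p ⁻¹' {q}) * g q v :=
    Finset.measurable_sum _ fun q _ => (hg q).const_mul _
  have hsum_int : Integrable (fun ω => ∑ q, μ.real (p ⁻¹' {q}) * g q (V ω)) μ :=
    integrable_finsetSum _ fun q _ => (hgint q).const_mul _
  refine (ae_eq_condExp_of_forall_setIntegral_eq hV.comap_le
    (Integrable.apply_index hgint hp) (fun _ _ _ => hsum_int.integrableOn) ?_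
    (hsum_meas.comp (comap_measurable V)).aestronglyMeasurable).symm
  rintro _ ⟨T, hT, rfl⟩ -
  have hVT : MeasurableSet (V ⁻¹' T) := hV hT
  have hcomp : ∀ h : E → ℝ,
      (fun ω => T.indicator h (V ω)) = (V ⁻¹' T).indicator fun ω => h (V ω) :=
    fun h => funext fun ω => (Set.indicator_comp_right (g := h) V).symm
  have hsplit := hind.integral_eq_sum_mul_integral hp hV (g := fun q => T.indicator (g q))
    (fun q => (hg q).indicator hT) fun q => by rw [hcomp]; exact (hgint q).indicator hVT
  calc ∫ ω in V ⁻¹' T, ∑ q, μ.real (p ⁻¹' {q}) * g q (V ω) ∂μ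
      = ∑ q, μ.real (p ⁻¹' {q}) * ∫ ω in V ⁻¹' T, g q (V ω) ∂μ := by
        rw [integral_finsetSum _ fun q _ => ((hgint q).const_mul _).integrableOn]
        simp only [integral_const_mul]
    _ = ∫ ω, T.indicator (g (p ω)) (V ω) ∂μ := by
        rw [hsplit]
        simp only [hcomp, integral_indicator hVT]
    _ = ∫ ω in V ⁻¹' T, g (p ω) (V ω) ∂μ := by
        rw [← integral_indicator hVT]
        rfl

end ProbabilityTheory.IndepFun

theorem MeasureTheory.condExp_mul_add_mul_ae_eq {Ω : Type*} {m m₀ : MeasurableSpace Ω}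
    {μ : Measure Ω} (hm : m ≤ m₀) [SigmaFinite (μ.trim hm)] {f g : Ω → ℝ}
    (hf : StronglyMeasurable[m] f) (hfint : Integrable f μ) (hgint : Integrable g μ) (a b : ℝ) :
    μ[fun ω => a * f ω + b * g ω | m] =ᵐ[μ] fun ω => a * f ω + b * μ[g | m] ω := by
  change μ[a • f + b • g | m] =ᵐ[μ] _
  filter_upwards [condExp_add (hfint.smul a) (hgint.smul b) m, condExp_smul a f m,
    condExp_smul b g m] with ω hadd hf_smul hg_smul
  rw [hadd, Pi.add_apply, hf_smul, hg_smul, condExp_of_stronglyMeasurable hm hf hfint]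
  rfl

section CombinatorialSum

open Equiv Equiv.Perm

variable {Ω : Type*} {n : ℕ} {X : Fin n → Fin n → Ω → ℝ} {π : Ω → Perm (Fin n)}
  {p : Ω → Fin n × Fin n}

theorem permSum'_eq_arraySum (ω : Ω) :
    permSum' n X π p ω = (π ω * swap (p ω).1 (p ω).2).arraySum fun q => X q.1 q.2 ω := by
  rw [arraySum_mul_swap]
  rfl

variable [MeasurableSpace Ω] {μ : Measure Ω}

theorem measurable_array (hmeas : ∀ i j, Measurable (X i j)) :
    Measurable fun ω (q : Fin n × Fin n) => X q.1 q.2 ω :=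
  measurable_pi_lambda _ fun q => hmeas q.1 q.2

theorem integrable_arraySum (hint : ∀ i j, Integrable (X i j) μ) {ρ : Ω → Perm (Fin n)}
    (hρ : Measurable ρ) : Integrable (fun ω => (ρ ω).arraySum fun q => X q.1 q.2 ω) μ :=
  integrable_finsetSum _ fun i _ =>
    Integrable.apply_index (f := fun q : Fin n × Fin n => X q.1 q.2) (fun q => hint q.1 q.2)
      (measurable_const.prodMk ((measurable_of_countable fun σ : Perm (Fin n) => σ i).comp hρ))

variable [IsFiniteMeasure μ]

theorem identDistrib_permSum_permSum' (hmeas : ∀ i j, Measurable (X i j)) (hπ : Measurable π)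
    {c : ℝ≥0∞} (hπunif : ∀ σ, μ (π ⁻¹' {σ}) = c)
    (hπindep : IndepFun π (fun ω (q : Fin n × Fin n) => X q.1 q.2 ω) μ) (hp : Measurable p)
    (hpindep : IndepFun p (fun ω => ((fun q : Fin n × Fin n => X q.1 q.2 ω), π ω)) μ) :
    IdentDistrib (fun ω => (permSum n X π ω, permSum' n X π p ω))
      (fun ω => (permSum' n X π p ω, permSum n X π ω)) μ μ := by
  have hY := measurable_array hmeas
  have hV := hY.prodMk hπ
  let Φ (q : Fin n × Fin n) (v : (Fin n × Fin n → ℝ) × Perm (Fin n)) : ℝ × ℝ :=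
    (v.2.arraySum v.1, (v.2 * swap q.1 q.2).arraySum v.1)
  have hmul : ∀ τ : Perm (Fin n),
      Measurable fun v : (Fin n × Fin n → ℝ) × Perm (Fin n) => (v.1, v.2 * τ) :=
    fun τ => measurable_fst.prodMk (measurable_snd.mul_const τ)
  have hΦ : ∀ q, Measurable (Φ q) := fun q =>
    measurable_arraySum_uncurry.prodMk (measurable_arraySum_uncurry.comp (hmul _))
  have hΦswap : ∀ q, Measurable fun v : (Fin n × Fin n → ℝ) × Perm (Fin n) =>
      Φ q (v.1, v.2 * swap q.1 q.2) := fun q => (hΦ q).comp (hmul _)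
  have hL : (fun ω => (permSum n X π ω, permSum' n X π p ω))
      = fun ω => Φ (p ω) ((fun q => X q.1 q.2 ω), π ω) := by
    funext ω
    rw [permSum'_eq_arraySum]
    rfl
  have hR : (fun ω => (permSum' n X π p ω, permSum n X π ω))
      = fun ω => Φ (p ω) ((fun q => X q.1 q.2 ω), π ω * swap (p ω).1 (p ω).2) := by
    funext ω
    simp only [Φ, permSum'_eq_arraySum, mul_assoc, swap_mul_self, mul_one]
    rfl
  refine ⟨(hL ▸ Measurable.apply_index hΦ hp hV).aemeasurable,
    (hR ▸ Measurable.apply_index hΦswap hp hV).aemeasurable, ?_⟩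
  rw [hL, hR, hpindep.map_eq_sum_smul_map hp hV hΦ, hpindep.map_eq_sum_smul_map hp hV hΦswap]
  refine Finset.sum_congr rfl fun q _ => congrArg _ ?_
  exact ((identDistrib_prod_mul_right_of_uniform hY hπ hπindep.symm hπunif _).comp
    (hΦ q)).map_eq.symm

theorem condExp_permSum'_sub_permSum (hn : 2 ≤ n) (hmeas : ∀ i j, Measurable (X i j))
    (hint : ∀ i j, Integrable (X i j) μ) (hπ : Measurable π) (hp : Measurable p)
    (hpunif : ∀ i j : Fin n, i ≠ j →
      μ {ω | p ω = (i, j)} = 1 / ((n * (n - 1) : ℕ) : ℝ≥0∞))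
    (hpindep : IndepFun p (fun ω => ((fun q : Fin n × Fin n => X q.1 q.2 ω), π ω)) μ) :
    μ[fun ω => permSum' n X π p ω - permSum n X π ω
        | MeasurableSpace.comap (permSum n X π) inferInstance]
      =ᵐ[μ] fun ω =>
        -(2 / ((n : ℝ) - 1)) * permSum n X π ω
        + (2 / ((n : ℝ) * ((n : ℝ) - 1)))
          * ((μ[fun ω' => ∑ i, ∑ j, X i j ω'
              | MeasurableSpace.comap (permSum n X π) inferInstance]) ω) := by
  have hV := (measurable_array hmeas).prodMk hπ
  have hW : Measurable (permSum n X π) := measurable_arraySum_uncurry.comp hV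
  have hWV : MeasurableSpace.comap (permSum n X π) inferInstance
      ≤ MeasurableSpace.comap (fun ω => ((fun q : Fin n × Fin n => X q.1 q.2 ω), π ω))
          inferInstance :=
    MeasurableSpace.comap_le_comap_of_eq_comp _ measurable_arraySum_uncurry rfl
  let d (q : Fin n × Fin n) (v : (Fin n × Fin n → ℝ) × Perm (Fin n)) : ℝ :=
    (v.2 * swap q.1 q.2).arraySum v.1 - v.2.arraySum v.1
  have hd : ∀ q, Measurable (d q) := fun q =>
    (measurable_arraySum_uncurry.comp (measurable_fst.prodMk (measurable_snd.mul_const _))).sub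
      measurable_arraySum_uncurry
  have hdint : ∀ q, Integrable (fun ω => d q ((fun q : Fin n × Fin n => X q.1 q.2 ω), π ω)) μ :=
    fun q => (integrable_arraySum hint (hπ.mul_const _)).sub (integrable_arraySum hint hπ)
  have hdiff : (fun ω => permSum' n X π p ω - permSum n X π ω)
      = fun ω => d (p ω) ((fun q : Fin n × Fin n => X q.1 q.2 ω), π ω) := by
    funext ω
    rw [permSum'_eq_arraySum]
    rfl
  have hweight : ∀ q : Fin n × Fin n, q.1 ≠ q.2 →
      μ.real (p ⁻¹' {q}) = ((Fintype.card (Fin n) * (Fintype.card (Fin n) - 1) : ℕ) : ℝ)⁻¹ := by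
    intro q hq
    rw [measureReal_def, Fintype.card_fin, ← one_div, ← ENNReal.toReal_natCast,
      ← ENNReal.toReal_one, ← ENNReal.toReal_div]
    exact congrArg ENNReal.toReal (hpunif q.1 q.2 hq)
  have havg : ∀ ω, ∑ q, μ.real (p ⁻¹' {q}) * d q ((fun q : Fin n × Fin n => X q.1 q.2 ω), π ω)
      = -(2 / ((n : ℝ) - 1)) * permSum n X π ω
        + 2 / ((n : ℝ) * ((n : ℝ) - 1)) * ∑ i, ∑ j, X i j ω := fun ω => by
    have := sum_mul_arraySum_mul_swap_sub_of_uniform (by simpa using hn) hweight (π ω)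
      fun q => X q.1 q.2 ω
    rw [Fintype.card_fin] at this
    exact this
  calc μ[fun ω => permSum' n X π p ω - permSum n X π ω
        | MeasurableSpace.comap (permSum n X π) inferInstance]
      =ᵐ[μ] μ[μ[fun ω => permSum' n X π p ω - permSum n X π ω
        | MeasurableSpace.comap _ inferInstance]
        | MeasurableSpace.comap (permSum n X π) inferInstance] :=
        (condExp_condExp_of_le hWV hV.comap_le).symm
    _ =ᵐ[μ] μ[fun ω => -(2 / ((n : ℝ) - 1)) * permSum n X π ω
        + 2 / ((n : ℝ) * ((n : ℝ) - 1)) * ∑ i, ∑ j, X i j ω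
        | MeasurableSpace.comap (permSum n X π) inferInstance] := by
        refine condExp_congr_ae ?_
        rw [hdiff]
        exact (hpindep.condExp_comap_ae_eq_sum hp hV hd hdint).trans
          (Filter.Eventually.of_forall havg)
    _ =ᵐ[μ] _ := condExp_mul_add_mul_ae_eq hW.comap_le (comap_measurable _).stronglyMeasurable
        (integrable_arraySum hint hπ)
        (integrable_finsetSum _ fun i _ => integrable_finsetSum _ fun j _ => hint i j) _ _

end CombinatorialSum

theorem combinatorial_sum_exchangeable_pair_general
    {Ω : Type*} [MeasureSpace Ω] [IsProbabilityMeasure (ℙ : Measure Ω)]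
    (n : ℕ) (hn : 2 ≤ n)
    (X : Fin n → Fin n → Ω → ℝ)
    (hmeas : ∀ i j, Measurable (X i j))
    (hint : ∀ i j, Integrable (X i j) ℙ)
    (π : Ω → Equiv.Perm (Fin n)) (hπmeas : Measurable π)
    (hπunif : ∀ σ : Equiv.Perm (Fin n), ℙ {ω | π ω = σ} = 1 / (n.factorial : ℝ≥0∞))
    (hπindep : IndepFun π (fun ω (q : Fin n × Fin n) => X q.1 q.2 ω) ℙ)
    (p : Ω → Fin n × Fin n) (hpmeas : Measurable p)
    (hpunif : ∀ i j : Fin n, i ≠ j →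
      ℙ {ω | p ω = (i, j)} = 1 / ((n * (n - 1) : ℕ) : ℝ≥0∞))
    (hpindep : IndepFun p
      (fun ω => ((fun q : Fin n × Fin n => X q.1 q.2 ω), π ω)) ℙ) :
    IdentDistrib (fun ω => (permSum n X π ω, permSum' n X π p ω))
        (fun ω => (permSum' n X π p ω, permSum n X π ω)) ℙ ℙ
    ∧ ℙ[fun ω => permSum' n X π p ω - permSum n X π ω
          | MeasurableSpace.comap (permSum n X π) inferInstance]
        =ᵐ[ℙ] fun ω =>
          -(2 / ((n : ℝ) - 1)) * permSum n X π ω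
          + (2 / ((n : ℝ) * ((n : ℝ) - 1)))
            * ((ℙ[fun ω' => ∑ i, ∑ j, X i j ω'
                | MeasurableSpace.comap (permSum n X π) inferInstance]) ω) :=
  ⟨identDistrib_permSum_permSum' hmeas hπmeas hπunif hπindep hpmeas hpindep,
    condExp_permSum'_sub_permSum hn hmeas hint hπmeas hpmeas hpunif hpindep⟩

/-- **Construction of the exchangeable pair for the full combinatorial sum
(equation (3.3)):** `(W, W')` is exchangeable and `E(W' - W | W) = -λ W + R` with
`λ = 2/(n-1)` and `R = (2/(n(n-1))) E(∑_{i,j} X_{ij} | W)`. -/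
theorem combinatorial_sum_exchangeable_pair
    {Ω : Type*} [MeasureSpace Ω] [IsProbabilityMeasure (ℙ : Measure Ω)]
    (n : ℕ) (hn : 2 ≤ n)
    (X : Fin n → Fin n → Ω → ℝ) (c : Fin n → Fin n → ℝ)
    (hmeas : ∀ i j, Measurable (X i j))
    (hint : ∀ i j, Integrable (X i j) ℙ)
    (hindep : iIndepFun (fun q : Fin n × Fin n => X q.1 q.2) ℙ)
    (hmean : ∀ i j, ∫ ω, X i j ω ∂ℙ = c i j)
    (hrow : ∀ i, ∑ j, c i j = 0)
    (hcol : ∀ j, ∑ i, c i j = 0)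
    (π : Ω → Equiv.Perm (Fin n)) (hπmeas : Measurable π)
    (hπunif : ∀ σ : Equiv.Perm (Fin n), ℙ {ω | π ω = σ} = 1 / (n.factorial : ℝ≥0∞))
    (hπindep : IndepFun π (fun ω (q : Fin n × Fin n) => X q.1 q.2 ω) ℙ)
    (p : Ω → Fin n × Fin n) (hpmeas : Measurable p)
    (hpunif : ∀ i j : Fin n, i ≠ j →
      ℙ {ω | p ω = (i, j)} = 1 / ((n * (n - 1) : ℕ) : ℝ≥0∞))
    (hpindep : IndepFun p
      (fun ω => ((fun q : Fin n × Fin n => X q.1 q.2 ω), π ω)) ℙ) :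
    IdentDistrib (fun ω => (permSum n X π ω, permSum' n X π p ω))
        (fun ω => (permSum' n X π p ω, permSum n X π ω)) ℙ ℙ
    ∧ ℙ[fun ω => permSum' n X π p ω - permSum n X π ω
          | MeasurableSpace.comap (permSum n X π) inferInstance]
        =ᵐ[ℙ] fun ω =>
          -(2 / ((n : ℝ) - 1)) * permSum n X π ω
          + (2 / ((n : ℝ) * ((n : ℝ) - 1)))
            * ((ℙ[fun ω' => ∑ i, ∑ j, X i j ω'
                | MeasurableSpace.comap (permSum n X π) inferInstance]) ω) :=
  combinatorial_sum_exchangeable_pair_general n hn X hmeas hint π hπmeas hπunif hπindep p hpmeas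
    hpunif hpindep
end

section
/- Let Y_1,…,Y_n be independent real random variables and 1 ≤ k ≤ n. Construct an n×n array Y whose first k rows are independent copies of the vector (Y_1,…,Y_n) and whose remaining n−k rows are identically zero, and let π be a uniform random permutation of {1,…,n} independent of the array. Then Σ_{i=1}^n Y_{iπ(i)} has the same distribution as Σ_{i=1}^k Y_{ξ_i}, where (ξ_1,…,ξ_k) is a uniformly chosen sequence of k distinct indices from {1,…,n}, independent of Y_1,…,Y_n. -/
open MeasureTheory ProbabilityTheory
open scoped ENNReal

noncomputable instance (k n : ℕ) : MeasurableSpace (Fin k ↪ Fin n) := ⊤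

/-!
Conditioning on the permutation: for a fixed `σ` the rows below `k` vanish, and the first `k` rows
are independent copies of `(Y₁, …, Yₙ)` read at the distinct columns `σ 0, …, σ (k - 1)`, so
`∑ i, Yarr i (σ i)` has the law of `∑ i < k, Y (σ i)`. Since the symmetric group acts transitively
on injective `k`-tuples, `σ ↦ (σ 0, …, σ (k - 1))` pushes the uniform law on permutations to the
uniform law on such tuples, and conditioning on `ξ` produces the same mixture.
-/

open Finset

namespace MulAction

variable {G X : Type*} [Group G] [Fintype G] [MulAction G X] [Fintype X] [IsPretransitive G X]

theorem card_nsmul_sum_comp_smul {M : Type*} [AddCommMonoid M] (f : X → M) (x₀ : X) :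
    Fintype.card X • ∑ g : G, f (g • x₀) = Fintype.card G • ∑ x, f x := by
  have hbase : ∀ x, ∑ g : G, f (g • x) = ∑ g : G, f (g • x₀) := by
    intro x
    obtain ⟨h, rfl⟩ := exists_smul_eq G x₀ x
    simp_rw [smul_smul]
    exact Equiv.sum_comp (Equiv.mulRight h) fun g => f (g • x₀)
  calc Fintype.card X • ∑ g : G, f (g • x₀) = ∑ x : X, ∑ g : G, f (g • x) := by
        rw [sum_congr rfl fun x _ => hbase x, sum_const, card_univ]
    _ = ∑ g : G, ∑ x, f (g • x) := sum_comm
    _ = ∑ g : G, ∑ x, f x := sum_congr rfl fun g _ => Equiv.sum_comp (toPerm g) f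
    _ = Fintype.card G • ∑ x, f x := by rw [sum_const, card_univ]

theorem inv_card_smul_sum_comp_smul {M : Type*} [AddCommMonoid M] [Module ℝ≥0∞ M]
    (f : X → M) (x₀ : X) :
    (Fintype.card G : ℝ≥0∞)⁻¹ • ∑ g : G, f (g • x₀) = (Fintype.card X : ℝ≥0∞)⁻¹ • ∑ x, f x := by
  have : Nonempty X := ⟨x₀⟩
  set a : ℝ≥0∞ := (Fintype.card X : ℝ≥0∞)
  set b : ℝ≥0∞ := (Fintype.card G : ℝ≥0∞)
  have ha : a ≠ 0 := by simp [a, Fintype.card_ne_zero]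
  have hb : b ≠ 0 := by simp [b, Fintype.card_ne_zero]
  have h : a • ∑ g : G, f (g • x₀) = b • ∑ x, f x := by
    simp only [a, b, Nat.cast_smul_eq_nsmul, card_nsmul_sum_comp_smul]
  calc b⁻¹ • ∑ g : G, f (g • x₀) = (b⁻¹ * a⁻¹) • a • ∑ g : G, f (g • x₀) := by
        rw [smul_smul, mul_assoc, ENNReal.inv_mul_cancel ha (ENNReal.natCast_ne_top _), mul_one]
    _ = a⁻¹ • ∑ x, f x := by
        rw [h, smul_smul, mul_comm b⁻¹, mul_assoc,
          ENNReal.inv_mul_cancel hb (ENNReal.natCast_ne_top _), mul_one]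

end MulAction

theorem measurable_apply_of_countable {Ω T E F : Type*} [MeasurableSpace Ω] [Countable T]
    [MeasurableSpace T] [MeasurableSingletonClass T] [MeasurableSpace E] [MeasurableSpace F]
    {τ : Ω → T} {V : Ω → E} (hτ : Measurable τ) (hV : Measurable V) {g : T → E → F}
    (hg : ∀ t, Measurable (g t)) : Measurable fun ω => g (τ ω) (V ω) :=
  (measurable_from_prod_countable_left (f := fun p : E × T => g p.2 p.1) hg).comp
    (hV.prodMk hτ)

namespace ProbabilityTheory

variable {Ω : Type*} [MeasurableSpace Ω] {μ : Measure Ω}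

theorem IndepFun.map_apply_eq_sum_smul_map {T E F : Type*} [Fintype T] [MeasurableSpace T]
    [MeasurableSingletonClass T] [MeasurableSpace E] [MeasurableSpace F]
    {τ : Ω → T} {V : Ω → E} (hind : IndepFun τ V μ) (hτ : Measurable τ) (hV : Measurable V)
    {g : T → E → F} (hg : ∀ t, Measurable (g t)) :
    μ.map (fun ω => g (τ ω) (V ω)) = ∑ t, μ {ω | τ ω = t} • μ.map (fun ω => g t (V ω)) := by
  ext s hs
  rw [Measure.map_apply (measurable_apply_of_countable hτ hV hg) hs, Measure.finsetSum_apply]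
  have hpre : (fun ω => g (τ ω) (V ω)) ⁻¹' s = ⋃ t, τ ⁻¹' {t} ∩ V ⁻¹' (g t ⁻¹' s) := by
    ext ω
    simp
  have hdisj : Pairwise (Function.onFun Disjoint fun t => τ ⁻¹' {t} ∩ V ⁻¹' (g t ⁻¹' s)) :=
    fun t t' htt' => Set.disjoint_left.2 fun ω ht ht' => htt' (ht.1.symm.trans ht'.1)
  rw [hpre, measure_iUnion hdisj fun t =>
    ((measurableSet_singleton t).preimage hτ).inter ((hg t hs).preimage hV), tsum_fintype]
  refine sum_congr rfl fun t _ => ?_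
  rw [hind.measure_inter_preimage_eq_mul _ _ (measurableSet_singleton t) (hg t hs),
    Measure.smul_apply, smul_eq_mul,
    Measure.map_apply (show Measurable fun ω => g t (V ω) from (hg t).comp hV) hs]
  rfl

theorem identDistrib_sum_apply_embedding {ι κ M : Type*} [Fintype ι] [AddCommMonoid M]
    [MeasurableSpace M] [MeasurableAdd₂ M] {R : ι → Ω → κ → M} {Y : κ → Ω → M}
    (hR : iIndepFun R μ) (hY : iIndepFun Y μ)
    (hRY : ∀ i, IdentDistrib (R i) (fun ω j => Y j ω) μ μ) (e : ι ↪ κ) :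
    IdentDistrib (fun ω => ∑ i, R i ω (e i)) (fun ω => ∑ i, Y (e i) ω) μ μ := by
  have hcoords : iIndepFun (fun i ω => R i ω (e i)) μ :=
    hR.comp (fun i v => v (e i)) fun i => measurable_pi_apply (e i)
  exact (IdentDistrib.pi (fun i => (hRY i).comp (measurable_pi_apply (e i))) hcoords
    (hY.precomp e.injective)).comp (measurable_sum univ fun i _ => measurable_pi_apply i)

end ProbabilityTheory

/-- **Reduction of sampling without replacement to a combinatorial sum (Corollary 1.2's
construction):** if the `n × n` array `Yarr` has its first `k` rows independent copies of
the vector `(Y 1, …, Y n)` and its remaining rows zero, and `π` is a uniform random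
permutation independent of the array, then `∑ i, Yarr i (π i)` has the same distribution
as `∑_{i < k} Y (ξ i)`, where `ξ` is a uniformly random sequence of `k` distinct indices
independent of the `Y i`. -/
theorem perm_sum_eq_sampling_without_replacement
    {Ω : Type*} [MeasureSpace Ω] [IsProbabilityMeasure (ℙ : Measure Ω)]
    (n k : ℕ) (hk : k ≤ n)
    (Y : Fin n → Ω → ℝ)
    (hYmeas : ∀ i, Measurable (Y i))
    (hYindep : iIndepFun Y ℙ)
    (Yarr : Fin n → Fin n → Ω → ℝ)
    (hYarrmeas : ∀ i j, Measurable (Yarr i j))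
    (hrowsindep : iIndepFun
      (fun (i : Fin n) (ω : Ω) (j : Fin n) => Yarr i j ω) ℙ)
    (hrowscopy : ∀ i : Fin n, (i : ℕ) < k →
      IdentDistrib (fun (ω : Ω) (j : Fin n) => Yarr i j ω)
        (fun (ω : Ω) (j : Fin n) => Y j ω) ℙ ℙ)
    (hrowszero : ∀ i : Fin n, k ≤ (i : ℕ) → ∀ j ω, Yarr i j ω = 0)
    (π : Ω → Equiv.Perm (Fin n)) (hπmeas : Measurable π)
    (hπunif : ∀ σ : Equiv.Perm (Fin n), ℙ {ω | π ω = σ} = 1 / (n.factorial : ℝ≥0∞))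
    (hπindep : IndepFun π (fun ω (q : Fin n × Fin n) => Yarr q.1 q.2 ω) ℙ)
    (ξ : Ω → (Fin k ↪ Fin n)) (hξmeas : Measurable ξ)
    (hξunif : ∀ e : Fin k ↪ Fin n, ℙ {ω | ξ ω = e} = 1 / (n.descFactorial k : ℝ≥0∞))
    (hξindep : IndepFun ξ (fun ω (i : Fin n) => Y i ω) ℙ) :
    IdentDistrib (fun ω => ∑ i, Yarr i (π ω i) ω)
      (fun ω => ∑ i : Fin k, Y (ξ ω i) ω) ℙ ℙ := by
  have : MeasurableSingletonClass (Equiv.Perm (Fin n)) := ⟨fun _ => trivial⟩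
  have : MeasurableSingletonClass (Fin k ↪ Fin n) := ⟨fun _ => trivial⟩
  have := Equiv.Perm.isMultiplyPretransitive (Fin n) k
  set ι := Fin.castLEEmb hk
  have hArr : Measurable fun ω (q : Fin n × Fin n) => Yarr q.1 q.2 ω :=
    measurable_pi_lambda _ fun q => hYarrmeas q.1 q.2
  have hYvec : Measurable fun ω (i : Fin n) => Y i ω := measurable_pi_lambda _ hYmeas
  have hdiag : ∀ σ : Equiv.Perm (Fin n),
      Measurable fun v : Fin n × Fin n → ℝ => ∑ i, v (i, σ i) :=
    fun σ => measurable_sum _ fun i _ => measurable_pi_apply _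
  have hsample : ∀ e : Fin k ↪ Fin n, Measurable fun v : Fin n → ℝ => ∑ i, v (e i) :=
    fun e => measurable_sum _ fun i _ => measurable_pi_apply _
  have hlaw : ∀ σ : Equiv.Perm (Fin n), Measure.map (fun ω => ∑ i, Yarr i (σ i) ω) ℙ
      = Measure.map (fun ω => ∑ i, Y ((σ • ι) i) ω) ℙ := by
    intro σ
    have hrows : ∀ ω, ∑ i, Yarr i (σ i) ω = ∑ i, Yarr (ι i) ((σ • ι) i) ω := fun ω =>
      (Fintype.sum_of_injective ι ι.injective _ _ (fun i hi => hrowszero i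
        (not_lt.1 fun hlt => hi ⟨⟨i, hlt⟩, rfl⟩) _ ω) fun _ => rfl).symm
    simp_rw [hrows]
    exact (identDistrib_sum_apply_embedding (R := fun i ω j => Yarr (ι i) j ω)
      (hrowsindep.precomp ι.injective) hYindep
      (fun i => hrowscopy (ι i) i.isLt) (σ • ι)).map_eq
  refine ⟨(measurable_apply_of_countable hπmeas hArr hdiag).aemeasurable,
    (measurable_apply_of_countable hξmeas hYvec hsample).aemeasurable, ?_⟩
  rw [hπindep.map_apply_eq_sum_smul_map hπmeas hArr hdiag,
    hξindep.map_apply_eq_sum_smul_map hξmeas hYvec hsample]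
  simp only [hπunif, hξunif, hlaw, one_div, ← smul_sum]
  simpa [Fintype.card_perm, Fintype.card_embedding_eq] using
    MulAction.inv_card_smul_sum_comp_smul (G := Equiv.Perm (Fin n))
      (fun e : Fin k ↪ Fin n => Measure.map (fun ω => ∑ i, Y (e i) ω) ℙ) ι
end
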